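/- arXiv:1301.2151 — 11 statements merged into one kernel-verified Lean document; each statement's English description precedes it below -/
import Mathlib

section
/- Let 0 < τ < 1, and for a > 0 define N_a = min{k ∈ ℕ, k ≥ 1 : k·a ∈ [τ,1]+ℕ} and λ^∞(a) = (N_a / ⌈N_a·a⌉)·log 2. Then the function a ↦ λ^∞(a) is nonincreasing on (0,∞). -/
open Real Set

/-- `W_τ = [τ,1] + ℕ`. -/
def Wset (τ : ℝ) : Set ℝ := {x | ∃ n : ℕ, (n : ℝ) + τ ≤ x ∧ x ≤ (n : ℝ) + 1}

/-- `N_a = min {k ≥ 1 : k·a ∈ W_τ}`. -/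
noncomputable def Nmin (τ a : ℝ) : ℕ := sInf {k : ℕ | 1 ≤ k ∧ (k : ℝ) * a ∈ Wset τ}

/-- `λ^∞(a) = (N_a / ⌈N_a a⌉) log 2`. -/
noncomputable def lamInf (τ a : ℝ) : ℝ :=
  ((Nmin τ a : ℝ) / ((⌈(Nmin τ a : ℝ) * a⌉ : ℤ) : ℝ)) * Real.log 2

/-- The defining set of `Nmin` is nonempty. -/
lemma wset_exists (τ : ℝ) (hτ0 : 0 < τ) (hτ1 : τ < 1) {a : ℝ} (ha : 0 < a) :
    {k : ℕ | 1 ≤ k ∧ (k : ℝ) * a ∈ Wset τ}.Nonempty := by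
  obtain ⟨n, hn⟩ := exists_nat_one_div_lt (show (0:ℝ) < 1 - τ by linarith)
  obtain ⟨k, hk0, hkn, hk⟩ := Real.exists_nat_abs_mul_sub_round_le a (Nat.succ_pos n)
  set x : ℝ := (k : ℝ) * a with hxdef
  set r : ℤ := round x with hrdef
  have hx0 : 0 < x := mul_pos (by exact_mod_cast hk0) ha
  have habs : |x - r| < 1 - τ := by
    refine lt_of_le_of_lt hk ?_
    calc (1 : ℝ) / ((n + 1 : ℕ) + 1) ≤ 1 / (n + 1) := by
          apply one_div_le_one_div_of_le
          · positivity
          · push_cast; linarith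
      _ < 1 - τ := hn
  have habs1 := (abs_lt.mp habs).1
  have habs2 := (abs_lt.mp habs).2
  rcases le_or_gt x (r : ℝ) with hle | hlt
  · -- x ≤ r : x ∈ [r-1+τ, r]
    have hr1 : 1 ≤ r := by
      have h0 : (0 : ℤ) < r := by exact_mod_cast lt_of_lt_of_le hx0 hle
      omega
    refine ⟨k, hk0, (r - 1).toNat, ?_, ?_⟩
    · have hcast : (((r - 1).toNat : ℕ) : ℝ) = (r : ℝ) - 1 := by
        have := Int.toNat_of_nonneg (by omega : (0:ℤ) ≤ r - 1)
        exact_mod_cast congrArg (fun z : ℤ => (z : ℝ)) this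
      rw [hcast]; linarith
    · have hcast : (((r - 1).toNat : ℕ) : ℝ) = (r : ℝ) - 1 := by
        have := Int.toNat_of_nonneg (by omega : (0:ℤ) ≤ r - 1)
        exact_mod_cast congrArg (fun z : ℤ => (z : ℝ)) this
      rw [hcast]; linarith
  · -- r < x : fractional part δ = x - r is small and positive
    set δ : ℝ := x - r with hδdef
    have hδ0 : 0 < δ := by simp [hδdef]; linarith
    have hδ1 : δ < 1 - τ := habs2
    have hr0 : 0 ≤ r := by
      by_contra hcon
      push_neg at hcon
      have hr1 : r ≤ -1 := by omega
      have : (r : ℝ) ≤ -1 := by exact_mod_cast hr1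
      linarith
    have hex : ∃ m : ℕ, τ ≤ (m : ℝ) * δ := by
      obtain ⟨m, hm⟩ := exists_nat_ge (τ / δ)
      exact ⟨m, (div_le_iff₀ hδ0).mp hm⟩
    set m := Nat.find hex with hmdef
    have hm : τ ≤ (m : ℝ) * δ := Nat.find_spec hex
    have hm0 : 1 ≤ m := by
      rcases Nat.eq_zero_or_pos m with h | h
      · exfalso; rw [h] at hm; simp at hm; linarith
      · exact h
    have hmm : ¬ τ ≤ ((m - 1 : ℕ) : ℝ) * δ := Nat.find_min hex (by omega)
    push_neg at hmm
    have hmm' : ((m - 1 : ℕ) : ℝ) = (m : ℝ) - 1 := by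
      rw [Nat.cast_sub hm0, Nat.cast_one]
    rw [hmm'] at hmm
    have hmδ1 : (m : ℝ) * δ < 1 := by nlinarith
    refine ⟨m * k, Nat.one_le_iff_ne_zero.mpr (by positivity), m * r.toNat, ?_, ?_⟩
    · have hc1 : ((m * k : ℕ) : ℝ) * a = (m : ℝ) * x := by
        rw [hxdef]; push_cast; ring
      have hc2 : ((m * r.toNat : ℕ) : ℝ) = (m : ℝ) * (r : ℝ) := by
        have h := Int.toNat_of_nonneg hr0
        have h2 : ((r.toNat : ℕ) : ℝ) = (r : ℝ) := by
          exact_mod_cast congrArg (fun z : ℤ => (z : ℝ)) h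
        push_cast
        rw [h2]
      rw [hc1, hc2]
      have : (m : ℝ) * x = (m : ℝ) * (r : ℝ) + (m : ℝ) * δ := by rw [hδdef]; ring
      rw [this]; linarith
    · have hc1 : ((m * k : ℕ) : ℝ) * a = (m : ℝ) * x := by
        rw [hxdef]; push_cast; ring
      have hc2 : ((m * r.toNat : ℕ) : ℝ) = (m : ℝ) * (r : ℝ) := by
        have h := Int.toNat_of_nonneg hr0
        have h2 : ((r.toNat : ℕ) : ℝ) = (r : ℝ) := by
          exact_mod_cast congrArg (fun z : ℤ => (z : ℝ)) h
        push_cast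
        rw [h2]
      rw [hc1, hc2]
      have : (m : ℝ) * x = (m : ℝ) * (r : ℝ) + (m : ℝ) * δ := by rw [hδdef]; ring
      rw [this]; linarith

/-- If a positive real is not in `W_τ`, it lies strictly between `⌊x⌋` and `⌊x⌋ + τ`. -/
lemma not_wset_floor (τ : ℝ) (hτ1 : τ < 1) {x : ℝ} (hx : 0 < x) (h : x ∉ Wset τ) :
    ((⌊x⌋ : ℤ) : ℝ) < x ∧ x < ((⌊x⌋ : ℤ) : ℝ) + τ := by
  have hfl0 : 0 ≤ ⌊x⌋ := Int.floor_nonneg.mpr hx.le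
  constructor
  · rcases lt_or_eq_of_le (Int.floor_le x) with h' | h'
    · exact h'
    · exfalso
      have hfl1 : 1 ≤ ⌊x⌋ := by
        have h0 : (0 : ℝ) < ((⌊x⌋ : ℤ) : ℝ) := by rw [h']; exact hx
        have h1 : (0 : ℤ) < ⌊x⌋ := by exact_mod_cast h0
        omega
      refine h ⟨(⌊x⌋ - 1).toNat, ?_, ?_⟩
      · have hcast : (((⌊x⌋ - 1).toNat : ℕ) : ℝ) = ((⌊x⌋ : ℤ) : ℝ) - 1 := by
          have := Int.toNat_of_nonneg (by omega : (0:ℤ) ≤ ⌊x⌋ - 1)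
          exact_mod_cast congrArg (fun z : ℤ => (z : ℝ)) this
        rw [hcast]; linarith
      · have hcast : (((⌊x⌋ - 1).toNat : ℕ) : ℝ) = ((⌊x⌋ : ℤ) : ℝ) - 1 := by
          have := Int.toNat_of_nonneg (by omega : (0:ℤ) ≤ ⌊x⌋ - 1)
          exact_mod_cast congrArg (fun z : ℤ => (z : ℝ)) this
        rw [hcast]; linarith
  · by_contra hcon
    push_neg at hcon
    refine h ⟨⌊x⌋.toNat, ?_, ?_⟩
    · have hcast : ((⌊x⌋.toNat : ℕ) : ℝ) = ((⌊x⌋ : ℤ) : ℝ) := by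
        exact_mod_cast congrArg (fun z : ℤ => (z : ℝ)) (Int.toNat_of_nonneg hfl0)
      rw [hcast]; linarith
    · have hcast : ((⌊x⌋.toNat : ℕ) : ℝ) = ((⌊x⌋ : ℤ) : ℝ) := by
        exact_mod_cast congrArg (fun z : ℤ => (z : ℝ)) (Int.toNat_of_nonneg hfl0)
      rw [hcast]
      linarith [Int.lt_floor_add_one x]
  
/-- If `x ∈ W_τ` and `x > 0` then `⌈x⌉ - 1 + τ ≤ x ≤ ⌈x⌉` and `1 ≤ ⌈x⌉`. -/
lemma mem_wset_ceil (τ : ℝ) (hτ0 : 0 < τ) {x : ℝ} (hx : 0 < x) (h : x ∈ Wset τ) :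
    ((⌈x⌉ : ℤ) : ℝ) - 1 + τ ≤ x ∧ x ≤ ((⌈x⌉ : ℤ) : ℝ) ∧ 1 ≤ ⌈x⌉ := by
  obtain ⟨n, hn1, hn2⟩ := h
  have hceil : ⌈x⌉ = (n : ℤ) + 1 := by
    have h1 : ⌈x⌉ ≤ (n : ℤ) + 1 := Int.ceil_le.mpr (by push_cast; linarith)
    have h2 : (n : ℤ) < ⌈x⌉ := Int.lt_ceil.mpr (by push_cast; linarith)
    omega
  refine ⟨?_, Int.le_ceil x, by omega⟩
  rw [hceil]; push_cast; linarith

theorem stmt_1 (τ : ℝ) (hτ0 : 0 < τ) (hτ1 : τ < 1) :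
    AntitoneOn (lamInf τ) (Set.Ioi 0) := by
  intro a ha b hb hab
  simp only [Set.mem_Ioi] at ha hb
  -- setup for a
  set N : ℕ := Nmin τ a with hNdef
  have hNmem : 1 ≤ N ∧ (N : ℝ) * a ∈ Wset τ := Nat.sInf_mem (wset_exists τ hτ0 hτ1 ha)
  obtain ⟨hN1, hNW⟩ := hNmem
  have hN0 : (0 : ℝ) < N := by exact_mod_cast hN1
  have hNa0 : 0 < (N : ℝ) * a := mul_pos hN0 ha
  set M : ℤ := ⌈(N : ℝ) * a⌉ with hMdef
  obtain ⟨hMl, hMu, hM1⟩ := mem_wset_ceil τ hτ0 hNa0 hNW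
  rw [← hMdef] at hMl hMu hM1
  have hM0 : (0 : ℝ) < (M : ℝ) := by exact_mod_cast hM1
  -- setup for b
  set K : ℕ := Nmin τ b with hKdef
  have hKmem : 1 ≤ K ∧ (K : ℝ) * b ∈ Wset τ := Nat.sInf_mem (wset_exists τ hτ0 hτ1 hb)
  obtain ⟨hK1, hKW⟩ := hKmem
  have hK0 : (0 : ℝ) < K := by exact_mod_cast hK1
  have hKb0 : 0 < (K : ℝ) * b := mul_pos hK0 hb
  set L : ℤ := ⌈(K : ℝ) * b⌉ with hLdef
  obtain ⟨hLl, hLu, hL1⟩ := mem_wset_ceil τ hτ0 hKb0 hKW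
  rw [← hLdef] at hLl hLu hL1
  have hL0 : (0 : ℝ) < (L : ℝ) := by exact_mod_cast hL1
  -- key inequality K * M ≤ N * L
  have key : (K : ℝ) * (M : ℝ) ≤ (N : ℝ) * (L : ℝ) := by
    rcases lt_trichotomy K N with hKN | hKN | hKN
    · -- K < N : K·a ∉ W
      have hKaW : (K : ℝ) * a ∉ Wset τ := by
        have := Nat.notMem_of_lt_sInf (show K < Nmin τ a from hKN)
        intro hmem
        exact this ⟨hK1, hmem⟩
      have hKa0 : 0 < (K : ℝ) * a := mul_pos hK0 ha
      obtain ⟨hp1, hp2⟩ := not_wset_floor τ hτ1 hKa0 hKaW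
      set p : ℤ := ⌊(K : ℝ) * a⌋ with hpdef
      by_contra hcon
      push_neg at hcon
      have hcon' : (N : ℝ) * (L : ℝ) + 1 ≤ (K : ℝ) * (M : ℝ) := by
        have : (N : ℤ) * L < (K : ℤ) * M := by exact_mod_cast hcon
        have : (N : ℤ) * L + 1 ≤ (K : ℤ) * M := this
        exact_mod_cast this
      have hKN' : (K : ℝ) ≤ (N : ℝ) - 1 := by
        have : (K : ℕ) + 1 ≤ N := hKN
        have : ((K : ℕ) : ℝ) + 1 ≤ (N : ℝ) := by exact_mod_cast this
        linarith
      have e1 : (K : ℝ) * (M : ℝ) ≤ (K : ℝ) * ((N : ℝ) * a + 1 - τ) :=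
        mul_le_mul_of_nonneg_left (by linarith) hK0.le
      have e2 : (N : ℝ) * ((K : ℝ) * a) < (N : ℝ) * ((p : ℝ) + τ) :=
        (mul_lt_mul_iff_right₀ hN0).mpr hp2
      have e3 : (K : ℝ) * (1 - τ) ≤ ((N : ℝ) - 1) * (1 - τ) :=
        mul_le_mul_of_nonneg_right hKN' (by linarith)
      have hNLp : (N : ℝ) * (L : ℝ) < (N : ℝ) * ((p : ℝ) + 1) := by nlinarith
      have hLp : (L : ℝ) < (p : ℝ) + 1 := lt_of_mul_lt_mul_left hNLp hN0.le
      have hLp' : L ≤ p := by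
        have : L < p + 1 := by exact_mod_cast hLp
        omega
      have hLp'' : (L : ℝ) ≤ (p : ℝ) := by exact_mod_cast hLp'
      have hab' : (K : ℝ) * a ≤ (K : ℝ) * b := mul_le_mul_of_nonneg_left hab hK0.le
      linarith
    · -- K = N
      have hcc : (N : ℝ) * a ≤ (K : ℝ) * b := by
        rw [hKN]; exact mul_le_mul_of_nonneg_left hab hN0.le
      have hML : M ≤ L := by
        rw [hMdef, hLdef]; exact Int.ceil_le_ceil hcc
      have hML' : (M : ℝ) ≤ (L : ℝ) := by exact_mod_cast hML
      have hKNr : (K : ℝ) = (N : ℝ) := by rw [hKN]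
      nlinarith
    · -- N < K : N·b ∉ W
      have hNbW : (N : ℝ) * b ∉ Wset τ := by
        have := Nat.notMem_of_lt_sInf (show N < Nmin τ b from hKN)
        intro hmem
        exact this ⟨hN1, hmem⟩
      have hNb0 : 0 < (N : ℝ) * b := mul_pos hN0 hb
      obtain ⟨hq1, hq2⟩ := not_wset_floor τ hτ1 hNb0 hNbW
      set P : ℤ := ⌊(N : ℝ) * b⌋ with hPdef
      have hab' : (N : ℝ) * a ≤ (N : ℝ) * b := mul_le_mul_of_nonneg_left hab hN0.le
      have hMP : (M : ℝ) ≤ (P : ℝ) := by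
        by_contra hcon
        push_neg at hcon
        have : P + 1 ≤ M := by exact_mod_cast hcon
        have hPM : (P : ℝ) ≤ (M : ℝ) - 1 := by exact_mod_cast (by omega : P ≤ M - 1)
        linarith
      have hMb : (M : ℝ) < (N : ℝ) * b := lt_of_le_of_lt hMP hq1
      have : (K : ℝ) * (M : ℝ) < (K : ℝ) * ((N : ℝ) * b) :=
        (mul_lt_mul_iff_right₀ hK0).mpr hMb
      nlinarith
  -- conclude
  show ((K : ℝ) / (L : ℝ)) * Real.log 2 ≤ ((N : ℝ) / (M : ℝ)) * Real.log 2
  have hdiv : (K : ℝ) / (L : ℝ) ≤ (N : ℝ) / (M : ℝ) := by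
    rw [div_le_div_iff₀ hL0 hM0]
    linarith
  exact mul_le_mul_of_nonneg_right hdiv (Real.log_nonneg one_le_two)
end

section
/- Let 0 < τ < 1, and for a > 0 define N_a = min{k ∈ ℕ, k ≥ 1 : k·a ∈ [τ,1]+ℕ} and λ^∞(a) = (N_a / ⌈N_a·a⌉)·log 2. Then a ↦ λ^∞(a) is right continuous on (0,∞): for every a > 0, λ^∞(a) = lim_{x → a⁺} λ^∞(x). -/
open Real Set Filter

/-- Points in the open gap `(c, c+τ)` just above an integer `c` are not in `W`. -/
lemma notMem_gap {τ z : ℝ} (c : ℤ) (h1 : (c : ℝ) < z) (h2 : z < (c : ℝ) + τ) :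
    z ∉ Wset τ := by
  rintro ⟨m, hm1, hm2⟩
  have hmc : ((m : ℤ) : ℝ) < (c : ℝ) := by push_cast; linarith
  have hmc' : (m : ℤ) < c := by exact_mod_cast hmc
  have : ((m : ℤ) : ℝ) + 1 ≤ (c : ℝ) := by exact_mod_cast Int.add_one_le_iff.mpr hmc'
  push_cast at this
  linarith

/-- The complement of `W` is "right-open": if `y ∉ W`, a whole right-neighbourhood
of `y` misses `W`. -/
lemma notMem_W_right {τ y : ℝ} (hy0 : 0 ≤ y) (hy : y ∉ Wset τ) :
    ∃ ε > 0, ∀ z, y ≤ z → z < y + ε → z ∉ Wset τ := by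
  set c := ⌊y⌋ with hc
  have hcy : (c : ℝ) ≤ y := Int.floor_le y
  have hc0 : 0 ≤ c := Int.floor_nonneg.mpr hy0
  have hyc : y < (c : ℝ) + τ := by
    by_contra h
    push_neg at h
    apply hy
    refine ⟨c.toNat, ?_, ?_⟩
    · have : ((c.toNat : ℕ) : ℝ) = (c : ℝ) := by exact_mod_cast Int.toNat_of_nonneg hc0
      rw [this]; exact h
    · have : ((c.toNat : ℕ) : ℝ) = (c : ℝ) := by exact_mod_cast Int.toNat_of_nonneg hc0
      rw [this]; exact (Int.lt_floor_add_one y).le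
  refine ⟨(c : ℝ) + τ - y, by linarith, fun z hz1 hz2 => ?_⟩
  rcases eq_or_lt_of_le hz1 with rfl | h
  · exact hy
  · exact notMem_gap c (lt_of_le_of_lt hcy h) (by linarith)

/-- For every `a > 0` there is some `k ≥ 1` with `k·a ∈ W`. (Dirichlet) -/
lemma S_nonempty {τ a : ℝ} (hτ0 : 0 < τ) (hτ1 : τ < 1) (ha : 0 < a) :
    ∃ k : ℕ, 1 ≤ k ∧ (k : ℝ) * a ∈ Wset τ := by
  have hτ' : (0 : ℝ) < 1 - τ := by linarith
  obtain ⟨n, hn⟩ := exists_nat_gt (1 / (1 - τ))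
  have hn0 : 0 < n := by
    have h1 : (0 : ℝ) < 1 / (1 - τ) := by positivity
    exact_mod_cast Nat.cast_pos.mp (lt_trans h1 hn)
  obtain ⟨q, hq0, _, hq⟩ := Real.exists_nat_abs_mul_sub_round_le a hn0
  set p := round ((q : ℝ) * a) with hp
  set θ := (q : ℝ) * a - (p : ℝ) with hθdef
  have hθ : |θ| < 1 - τ := by
    have h1 : 1 / ((n : ℝ) + 1) < 1 - τ := by
      rw [div_lt_iff₀ (by positivity)]
      rw [div_lt_iff₀ hτ'] at hn
      nlinarith
    calc |θ| ≤ 1 / ((n : ℝ) + 1) := hq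
      _ < 1 - τ := h1
  have hq0' : (0 : ℝ) < (q : ℝ) := by exact_mod_cast hq0
  have hqa : 0 < (q : ℝ) * a := mul_pos hq0' ha
  have habs := abs_lt.mp hθ
  rcases le_or_gt θ 0 with hθ0 | hθ0
  · -- θ ≤ 0 : q·a ∈ [p-1+τ, p]
    have hp1 : 1 ≤ p := by
      have h2 : (0 : ℝ) < (p : ℝ) := by
        have h3 : (p : ℝ) = (q : ℝ) * a - θ := by rw [hθdef]; ring
        rw [h3]; linarith
      have : 0 < p := by exact_mod_cast h2
      omega
    have hcast : (((p - 1).toNat : ℕ) : ℝ) = (p : ℝ) - 1 := by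
      have : ((p - 1).toNat : ℤ) = p - 1 := Int.toNat_of_nonneg (by omega)
      exact_mod_cast this
    have hqa_eq : (q : ℝ) * a = (p : ℝ) + θ := by rw [hθdef]; ring
    exact ⟨q, hq0, (p - 1).toNat, by rw [hcast]; linarith, by rw [hcast]; linarith⟩
  · -- θ > 0
    set k := ⌈τ / θ⌉₊ with hk
    have hk1 : 1 ≤ k := by
      rw [hk]; exact Nat.ceil_pos.mpr (div_pos hτ0 hθ0)
    have hkθ1 : τ ≤ (k : ℝ) * θ := by
      rw [hk]
      have h3 := Nat.le_ceil (τ / θ)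
      rw [div_le_iff₀ hθ0] at h3
      exact h3
    have hkθ2 : (k : ℝ) * θ < 1 := by
      rw [hk]
      have h4 := Nat.ceil_lt_add_one (le_of_lt (div_pos hτ0 hθ0))
      have h5 := mul_lt_mul_of_pos_right h4 hθ0
      rw [add_mul, div_mul_cancel₀ _ (ne_of_gt hθ0), one_mul] at h5
      linarith
    have hp0 : 0 ≤ p := by
      have h6 : (-1 : ℝ) < (p : ℝ) := by
        have h7 : (p : ℝ) = (q : ℝ) * a - θ := by rw [hθdef]; ring
        rw [h7]; linarith
      have : (-1 : ℤ) < p := by exact_mod_cast h6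
      omega
    have hkq1 : 1 ≤ k * q := Nat.one_le_iff_ne_zero.mpr (Nat.mul_ne_zero (by omega) (by omega))
    have h8 : ((p.toNat : ℕ) : ℝ) = (p : ℝ) := by exact_mod_cast Int.toNat_of_nonneg hp0
    have hcast : ((k * p.toNat : ℕ) : ℝ) = (k : ℝ) * (p : ℝ) := by
      push_cast
      rw [h8]
    have hmul : ((k * q : ℕ) : ℝ) * a = (k : ℝ) * (p : ℝ) + (k : ℝ) * θ := by
      push_cast
      rw [hθdef]
      ring
    exact ⟨k * q, hkq1, k * p.toNat, by rw [hcast, hmul]; linarith,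
      by rw [hcast, hmul]; linarith⟩

set_option maxHeartbeats 2000000 in
theorem stmt_2 (τ : ℝ) (hτ0 : 0 < τ) (hτ1 : τ < 1) (a : ℝ) (ha : 0 < a) :
    Filter.Tendsto (lamInf τ) (nhdsWithin a (Set.Ioi a)) (nhds (lamInf τ a)) := by
  have hSa : {k : ℕ | 1 ≤ k ∧ (k : ℝ) * a ∈ Wset τ}.Nonempty := S_nonempty hτ0 hτ1 ha
  have hmem : Nmin τ a ∈ {k : ℕ | 1 ≤ k ∧ (k : ℝ) * a ∈ Wset τ} := Nat.sInf_mem hSa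
  set N := Nmin τ a with hNdef
  obtain ⟨hN1, n, hna1, hna2⟩ := hmem
  have hmin : ∀ k : ℕ, 1 ≤ k → (k : ℝ) * a ∈ Wset τ → N ≤ k :=
    fun k h1 h2 => Nat.sInf_le ⟨h1, h2⟩
  have hN0 : (0 : ℝ) < (N : ℝ) := by exact_mod_cast hN1
  have hlog : (0 : ℝ) < Real.log 2 := Real.log_pos (by norm_num)
  rcases lt_or_eq_of_le hna2 with hlt | heq
  · -- Case 1: N·a < n+1 : lamInf is locally constant to the right.
    have hceila : ⌈(N : ℝ) * a⌉ = (n : ℤ) + 1 := by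
      rw [Int.ceil_eq_iff]
      constructor
      · push_cast; linarith
      · push_cast; linarith
    have hev : ∀ᶠ x in nhdsWithin a (Set.Ioi a), lamInf τ x = lamInf τ a := by
      have hδ : (0 : ℝ) < ((n : ℝ) + 1 - (N : ℝ) * a) / (N : ℝ) := div_pos (by linarith) hN0
      have hev1 : ∀ᶠ x in nhdsWithin a (Set.Ioi a), (N : ℝ) * x ≤ (n : ℝ) + 1 := by
        filter_upwards [Ioo_mem_nhdsGT (lt_add_of_pos_right a hδ)] with x hx
        have h2 := hx.2
        have hNδ : (N : ℝ) * (((n : ℝ) + 1 - (N : ℝ) * a) / (N : ℝ))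
            = (n : ℝ) + 1 - (N : ℝ) * a := by field_simp
        nlinarith
      have hev2 : ∀ᶠ x in nhdsWithin a (Set.Ioi a),
          ∀ k ∈ Finset.range N, 1 ≤ k → (k : ℝ) * x ∉ Wset τ := by
        rw [eventually_all_finset]
        intro k hkmem
        rcases Nat.eq_zero_or_pos k with rfl | hk1
        · exact Eventually.of_forall fun x h => absurd h (by omega)
        · have hkN : k < N := Finset.mem_range.mp hkmem
          have hka : (k : ℝ) * a ∉ Wset τ := fun h => absurd (hmin k hk1 h) (by omega)
          have hk0 : (0 : ℝ) < (k : ℝ) := by exact_mod_cast hk1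
          obtain ⟨ε, hε, hε'⟩ := notMem_W_right (by positivity) hka
          filter_upwards [Ioo_mem_nhdsGT
            (lt_add_of_pos_right a (div_pos hε hk0))] with x hx _
          refine hε' _ (by nlinarith [hx.1]) ?_
          have h2 := hx.2
          have h3 : (k : ℝ) * (ε / (k : ℝ)) = ε := by field_simp
          nlinarith
      filter_upwards [hev1, hev2, self_mem_nhdsWithin] with x hx1 hx2 hx3
      have hxa : a < x := hx3
      have hNx1 : (n : ℝ) + τ ≤ (N : ℝ) * x := by nlinarith
      have hNxW : (N : ℝ) * x ∈ Wset τ := ⟨n, hNx1, hx1⟩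
      have hNx : Nmin τ x = N := by
        apply le_antisymm (Nat.sInf_le (show N ∈ {k : ℕ | 1 ≤ k ∧ (k : ℝ) * x ∈ Wset τ}
          from ⟨hN1, hNxW⟩))
        have hmemx : Nmin τ x ∈ {k : ℕ | 1 ≤ k ∧ (k : ℝ) * x ∈ Wset τ} :=
          Nat.sInf_mem (⟨N, hN1, hNxW⟩ :
            {k : ℕ | 1 ≤ k ∧ (k : ℝ) * x ∈ Wset τ}.Nonempty)
        by_contra h
        push_neg at h
        exact hx2 (Nmin τ x) (Finset.mem_range.mpr h) hmemx.1 hmemx.2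
      have hceilx : ⌈(N : ℝ) * x⌉ = (n : ℤ) + 1 := by
        rw [Int.ceil_eq_iff]
        constructor
        · push_cast; linarith
        · push_cast; linarith
      have hx_eq : lamInf τ x = ((N : ℝ) / ((n : ℝ) + 1)) * Real.log 2 := by
        unfold lamInf
        rw [hNx, hceilx]
        push_cast
        ring
      have ha_eq : lamInf τ a = ((N : ℝ) / ((n : ℝ) + 1)) * Real.log 2 := by
        unfold lamInf
        rw [← hNdef, hceila]
        push_cast
        ring
      rw [hx_eq, ha_eq]
    exact Filter.Tendsto.congr' (hev.mono fun x hx => hx.symm) tendsto_const_nhds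
  · -- Case 2: N·a = n+1.
    have hceila : ⌈(N : ℝ) * a⌉ = (n : ℤ) + 1 := by
      rw [Int.ceil_eq_iff]
      constructor
      · push_cast; linarith
      · push_cast; linarith
    have hNa : (N : ℝ) ≠ 0 := ne_of_gt hN0
    have ha0 : a ≠ 0 := ne_of_gt ha
    have hlamA : lamInf τ a = Real.log 2 / a := by
      unfold lamInf
      rw [← hNdef, hceila]
      push_cast
      rw [← heq]
      field_simp
    -- In this case, every hit of W by a multiple of a is at a right endpoint.
    have hint : ∀ k : ℕ, 1 ≤ k → (k : ℝ) * a ∈ Wset τ → ∃ m : ℕ, (k : ℝ) * a = (m : ℝ) + 1 := by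
      rintro k hk ⟨m, hm1, hm2⟩
      rcases eq_or_lt_of_le hm2 with hEq | hlt2
      · exact ⟨m, hEq⟩
      exfalso
      have hNpos : 0 < N := hN1
      obtain ⟨k', j, hk'1, hk'N, hkk⟩ :
          ∃ k' j : ℕ, 1 ≤ k' ∧ k' ≤ N ∧ k = k' + N * j := by
        refine ⟨(k - 1) % N + 1, (k - 1) / N, by omega, ?_, ?_⟩
        · have := Nat.mod_lt (k - 1) hNpos
          omega
        · have := Nat.div_add_mod (k - 1) N
          omega
      have hkkR : (k : ℝ) = (k' : ℝ) + (N : ℝ) * (j : ℝ) := by exact_mod_cast hkk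
      have hcast : (k : ℝ) * a = (k' : ℝ) * a + (j : ℝ) * ((n : ℝ) + 1) := by
        rw [hkkR, ← heq]; ring
      have hk'0 : (0 : ℝ) < (k' : ℝ) := by exact_mod_cast hk'1
      have hk'a_pos : 0 < (k' : ℝ) * a := mul_pos hk'0 ha
      set M : ℤ := (m : ℤ) - (j : ℤ) * ((n : ℤ) + 1) with hMdef
      have hMcast : (M : ℝ) = (m : ℝ) - (j : ℝ) * ((n : ℝ) + 1) := by
        rw [hMdef]; push_cast; ring
      have hb1 : (M : ℝ) + τ ≤ (k' : ℝ) * a := by rw [hMcast]; linarith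
      have hb2 : (k' : ℝ) * a < (M : ℝ) + 1 := by rw [hMcast]; linarith
      have hM0 : 0 ≤ M := by
        have h6 : (-1 : ℝ) < (M : ℝ) := by linarith
        have : (-1 : ℤ) < M := by exact_mod_cast h6
        omega
      have hMnat : ((M.toNat : ℕ) : ℝ) = (M : ℝ) := by exact_mod_cast Int.toNat_of_nonneg hM0
      have hk'W : (k' : ℝ) * a ∈ Wset τ :=
        ⟨M.toNat, by rw [hMnat]; exact hb1, by rw [hMnat]; linarith⟩
      have hk'eq : k' = N := le_antisymm hk'N (hmin k' hk'1 hk'W)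
      have hval : (k' : ℝ) * a = (n : ℝ) + 1 := by rw [hk'eq]; exact heq
      have e1 : ((n : ℤ) : ℝ) < (M : ℝ) := by push_cast; linarith
      have e2 : (M : ℝ) < ((n : ℤ) : ℝ) + 1 := by push_cast; linarith
      have e1' : (n : ℤ) < M := by exact_mod_cast e1
      have e2' : M < (n : ℤ) + 1 := by exact_mod_cast e2
      omega
    -- Eventual nonemptiness of the defining set for Nmin.
    have hne : ∀ᶠ x in nhdsWithin a (Set.Ioi a),
        {k : ℕ | 1 ≤ k ∧ (k : ℝ) * x ∈ Wset τ}.Nonempty := by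
      have hδ : (0 : ℝ) < (1 - τ) / (N : ℝ) := div_pos (by linarith) hN0
      filter_upwards [Ioo_mem_nhdsGT (lt_add_of_pos_right a hδ)] with x hx
      have hε0 : (0 : ℝ) < x - a := by linarith [hx.1]
      have hεlt : (N : ℝ) * (x - a) < 1 - τ := by
        have h2 := hx.2
        have h3 : (N : ℝ) * ((1 - τ) / (N : ℝ)) = 1 - τ := by field_simp
        nlinarith
      set m := ⌈τ / ((N : ℝ) * (x - a))⌉₊ with hm
      have hNε : (0 : ℝ) < (N : ℝ) * (x - a) := mul_pos hN0 hε0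
      have hm1 : 1 ≤ m := by
        rw [hm]; exact Nat.ceil_pos.mpr (div_pos hτ0 hNε)
      have hub : τ ≤ (m : ℝ) * ((N : ℝ) * (x - a)) := by
        rw [hm]
        have h3 := Nat.le_ceil (τ / ((N : ℝ) * (x - a)))
        rw [div_le_iff₀ hNε] at h3
        exact h3
      have hub2 : (m : ℝ) * ((N : ℝ) * (x - a)) < 1 := by
        rw [hm]
        have h4 := Nat.ceil_lt_add_one (le_of_lt (div_pos hτ0 hNε))
        have h5 := mul_lt_mul_of_pos_right h4 hNε
        rw [add_mul, div_mul_cancel₀ _ (ne_of_gt hNε), one_mul] at h5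
        linarith
      have key : ((N * m : ℕ) : ℝ) * x
          = (m : ℝ) * ((n : ℝ) + 1) + (m : ℝ) * ((N : ℝ) * (x - a)) := by
        push_cast
        rw [← heq]
        ring
      have hwit : ((m * (n + 1) : ℕ) : ℝ) = (m : ℝ) * ((n : ℝ) + 1) := by push_cast; ring
      exact ⟨N * m, Nat.one_le_iff_ne_zero.mpr (Nat.mul_ne_zero (by omega) (by omega)),
        m * (n + 1), by rw [key, hwit]; linarith, by rw [key, hwit]; linarith⟩
    -- Nmin tends to infinity from the right.
    have htop : Tendsto (fun x => Nmin τ x) (nhdsWithin a (Set.Ioi a)) atTop := by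
      rw [tendsto_atTop]
      intro K
      have hexcl : ∀ᶠ x in nhdsWithin a (Set.Ioi a),
          ∀ k ∈ Finset.range (K + 1), 1 ≤ k → (k : ℝ) * x ∉ Wset τ := by
        rw [eventually_all_finset]
        intro k _
        rcases Nat.eq_zero_or_pos k with rfl | hk1
        · exact Eventually.of_forall fun x h => absurd h (by omega)
        have hk0 : (0 : ℝ) < (k : ℝ) := by exact_mod_cast hk1
        by_cases hka : (k : ℝ) * a ∈ Wset τ
        · obtain ⟨m, hmeq⟩ := hint k hk1 hka
          filter_upwards [Ioo_mem_nhdsGT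
            (lt_add_of_pos_right a (div_pos hτ0 hk0))] with x hx _
          apply notMem_gap ((m : ℤ) + 1)
          · push_cast
            nlinarith [hx.1]
          · push_cast
            have h2 := hx.2
            have h3 : (k : ℝ) * (τ / (k : ℝ)) = τ := by field_simp
            nlinarith
        · obtain ⟨ε, hε, hε'⟩ := notMem_W_right (by positivity) hka
          filter_upwards [Ioo_mem_nhdsGT
            (lt_add_of_pos_right a (div_pos hε hk0))] with x hx _
          refine hε' _ (by nlinarith [hx.1]) ?_
          have h2 := hx.2
          have h3 : (k : ℝ) * (ε / (k : ℝ)) = ε := by field_simp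
          nlinarith
      filter_upwards [hexcl, hne] with x hx1 hx2
      have hmemx : Nmin τ x ∈ {k : ℕ | 1 ≤ k ∧ (k : ℝ) * x ∈ Wset τ} := Nat.sInf_mem hx2
      by_contra h
      push_neg at h
      exact hx1 (Nmin τ x) (Finset.mem_range.mpr (by omega)) hmemx.1 hmemx.2
    -- Eventual two-sided bounds on lamInf.
    have hbnd : ∀ᶠ x in nhdsWithin a (Set.Ioi a),
        Real.log 2 / (x + (1 - τ) / (Nmin τ x : ℝ)) ≤ lamInf τ x ∧
          lamInf τ x ≤ Real.log 2 / x := by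
      filter_upwards [hne, self_mem_nhdsWithin] with x hx hxa
      have hx0 : (0 : ℝ) < x := lt_trans ha hxa
      have hmemx : Nmin τ x ∈ {k : ℕ | 1 ≤ k ∧ (k : ℝ) * x ∈ Wset τ} := Nat.sInf_mem hx
      obtain ⟨hM1, m, h1, h2⟩ := hmemx
      have hM0 : (0 : ℝ) < (Nmin τ x : ℝ) := by exact_mod_cast hM1
      have hceil : ⌈(Nmin τ x : ℝ) * x⌉ = (m : ℤ) + 1 := by
        rw [Int.ceil_eq_iff]
        constructor
        · push_cast; linarith
        · push_cast; linarith
      have hlam : lamInf τ x = ((Nmin τ x : ℝ) / ((m : ℝ) + 1)) * Real.log 2 := by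
        unfold lamInf
        rw [hceil]
        push_cast
        ring
      have hm0 : (0 : ℝ) < (m : ℝ) + 1 := by positivity
      constructor
      · rw [hlam]
        have hden : (0 : ℝ) < x + (1 - τ) / (Nmin τ x : ℝ) :=
          add_pos_of_pos_of_nonneg hx0 (div_nonneg (by linarith) hM0.le)
        have key : 1 / (x + (1 - τ) / (Nmin τ x : ℝ)) ≤ (Nmin τ x : ℝ) / ((m : ℝ) + 1) := by
          rw [div_le_div_iff₀ hden hm0]
          have hexp : (Nmin τ x : ℝ) * (x + (1 - τ) / (Nmin τ x : ℝ))
              = (Nmin τ x : ℝ) * x + (1 - τ) := by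
            field_simp
          rw [one_mul, hexp]
          linarith
        calc Real.log 2 / (x + (1 - τ) / (Nmin τ x : ℝ))
            = (1 / (x + (1 - τ) / (Nmin τ x : ℝ))) * Real.log 2 := by ring
          _ ≤ ((Nmin τ x : ℝ) / ((m : ℝ) + 1)) * Real.log 2 :=
              mul_le_mul_of_nonneg_right key hlog.le
      · rw [hlam]
        have key : (Nmin τ x : ℝ) / ((m : ℝ) + 1) ≤ 1 / x := by
          rw [div_le_div_iff₀ hm0 hx0]
          nlinarith
        calc ((Nmin τ x : ℝ) / ((m : ℝ) + 1)) * Real.log 2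
            ≤ (1 / x) * Real.log 2 := mul_le_mul_of_nonneg_right key hlog.le
          _ = Real.log 2 / x := by ring
    -- Squeeze.
    have hxtend : Tendsto (fun x : ℝ => x) (nhdsWithin a (Set.Ioi a)) (nhds a) :=
      tendsto_id.mono_left nhdsWithin_le_nhds
    have hlow : Tendsto (fun x => Real.log 2 / (x + (1 - τ) / (Nmin τ x : ℝ)))
        (nhdsWithin a (Set.Ioi a)) (nhds (Real.log 2 / a)) := by
      have t1 : Tendsto (fun x => ((Nmin τ x : ℕ) : ℝ)) (nhdsWithin a (Set.Ioi a)) atTop :=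
        tendsto_natCast_atTop_atTop.comp htop
      have t2 : Tendsto (fun x => (1 - τ) / ((Nmin τ x : ℕ) : ℝ))
          (nhdsWithin a (Set.Ioi a)) (nhds 0) := Filter.Tendsto.div_atTop tendsto_const_nhds t1
      have t3 := hxtend.add t2
      rw [add_zero] at t3
      exact tendsto_const_nhds.div t3 (ne_of_gt ha)
    have hup : Tendsto (fun x : ℝ => Real.log 2 / x)
        (nhdsWithin a (Set.Ioi a)) (nhds (Real.log 2 / a)) :=
      tendsto_const_nhds.div hxtend (ne_of_gt ha)
    rw [hlamA]
    exact tendsto_of_tendsto_of_tendsto_of_le_of_le' hlow hup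
      (hbnd.mono fun x h => h.1) (hbnd.mono fun x h => h.2)
end

section
/- Let 0 < τ < 1 and λ^∞(a) = (N_a/⌈N_a a⌉) log 2 with N_a = min{k ≥ 1 : k·a ∈ [τ,1]+ℕ}. For every a > 0, the level set I_a = {x > 0 : λ^∞(x) = λ^∞(a)} is an interval with nonempty interior (it contains a nondegenerate interval of the form [a, a+ε) or (a−ε, a]). -/
open Real Set

lemma not_wset_of_lt {τ x : ℝ} (hx : x < τ) : x ∉ Wset τ := by
  rintro ⟨n, h1, _⟩
  have : (0:ℝ) ≤ n := n.cast_nonneg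
  linarith

lemma not_wset_of_between {τ y : ℝ} {c : ℤ} (h1 : (c:ℝ) - 1 < y) (h2 : y < (c:ℝ) - 1 + τ) :
    y ∉ Wset τ := by
  rintro ⟨m, hm1, hm2⟩
  have hmc : (m:ℝ) < (c:ℝ) - 1 := by linarith
  have hmc' : (m:ℤ) < c - 1 := by exact_mod_cast hmc
  have : (m:ℤ) + 1 ≤ c - 1 := by omega
  have : (m:ℝ) + 1 ≤ (c:ℝ) - 1 := by exact_mod_cast this
  linarith

lemma mem_wset {τ x : ℝ} (c : ℤ) (hc : 1 ≤ c) (h1 : (c:ℝ) - 1 + τ ≤ x) (h2 : x ≤ c) :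
    x ∈ Wset τ := by
  have h0 : ((c-1).toNat : ℤ) = c - 1 := Int.toNat_of_nonneg (by omega)
  have hcast : (((c-1).toNat : ℕ) : ℝ) = (c:ℝ) - 1 := by exact_mod_cast congrArg (Int.cast : ℤ → ℝ) h0
  exact ⟨(c-1).toNat, by rw [hcast]; linarith, by rw [hcast]; linarith⟩

lemma between_of_not_wset {τ : ℝ} (hτ1 : τ ≤ 1) {x : ℝ} (hx : 0 < x) (h : x ∉ Wset τ) :
    (⌈x⌉:ℝ) - 1 < x ∧ x < (⌈x⌉:ℝ) - 1 + τ := by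
  have h1 : (⌈x⌉:ℝ) - 1 < x := by linarith [Int.ceil_lt_add_one x]
  have hc1 : 1 ≤ ⌈x⌉ := by have := Int.ceil_pos.mpr hx; omega
  refine ⟨h1, ?_⟩
  by_contra hcon
  push_neg at hcon
  exact h (mem_wset ⌈x⌉ hc1 hcon (Int.le_ceil x))

lemma wset_bounds {τ x : ℝ} (hτ0 : 0 < τ) (hx : x ∈ Wset τ) :
    (⌈x⌉:ℝ) - 1 + τ ≤ x ∧ x ≤ (⌈x⌉:ℝ) ∧ 1 ≤ ⌈x⌉ := by
  obtain ⟨n, h1, h2⟩ := hx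
  have hceil : ⌈x⌉ = (n:ℤ) + 1 := by
    rw [Int.ceil_eq_iff]
    constructor
    · push_cast; linarith
    · push_cast; linarith
  rw [hceil]
  refine ⟨by push_cast; linarith, by push_cast; linarith, by omega⟩

lemma exists_mult_mem {τ : ℝ} (hτ0 : 0 < τ) (hτ1 : τ < 1) {a : ℝ} (ha : 0 < a) :
    ∃ k : ℕ, 1 ≤ k ∧ (k:ℝ) * a ∈ Wset τ := by
  have h1τ : 0 < 1 - τ := by linarith
  obtain ⟨n, hn0, hn⟩ : ∃ n : ℕ, 0 < n ∧ 1/((n:ℝ)+1) ≤ 1 - τ := by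
    refine ⟨⌈1/(1-τ)⌉₊ + 1, Nat.succ_pos _, ?_⟩
    rw [div_le_iff₀ (by positivity)]
    have h := Nat.le_ceil (1/(1-τ))
    have hcc : (1-τ) * (1/(1-τ)) = 1 := by field_simp
    push_cast
    nlinarith [mul_le_mul_of_nonneg_left h h1τ.le]
  obtain ⟨k, hk0, hkn, hk⟩ := Real.exists_nat_abs_mul_sub_round_le a hn0
  set r : ℤ := round ((k:ℝ)*a) with hr
  have hδ : |(k:ℝ)*a - r| ≤ 1 - τ := hk.trans hn
  obtain ⟨hδ1, hδ2⟩ := abs_le.mp hδ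
  have hka : 0 < (k:ℝ)*a := by positivity
  rcases le_or_gt ((k:ℝ)*a) r with hle | hlt
  · have hr1 : 1 ≤ r := by
      have h0 : (0:ℝ) < (r:ℝ) := hka.trans_le hle
      have : (0:ℤ) < r := by exact_mod_cast h0
      omega
    exact ⟨k, hk0, mem_wset r hr1 (by linarith) hle⟩
  · have hδpos : 0 < (k:ℝ)*a - r := by linarith
    have hr0 : 0 ≤ r := by
      have : (-1:ℝ) < (r:ℝ) := by linarith
      have : (-1:ℤ) < r := by exact_mod_cast this
      omega
    set d := (k:ℝ)*a - (r:ℝ) with hd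
    set m := ⌈τ/d⌉₊ with hm
    have hm1 : 1 ≤ m := Nat.one_le_iff_ne_zero.mpr (Nat.ceil_pos.mpr (by positivity)).ne'
    have hmτ : τ ≤ (m:ℝ) * d := by
      have h2 := Nat.le_ceil (τ/d)
      rw [← hm, div_le_iff₀ hδpos] at h2
      linarith
    have hmlt : (m:ℝ) < τ/d + 1 := Nat.ceil_lt_add_one (by positivity)
    have hmd1 : (m:ℝ) * d ≤ 1 := by
      have h3 := mul_lt_mul_of_pos_right hmlt hδpos
      have h4 : (τ/d + 1) * d = τ + d := by field_simp
      nlinarith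
    refine ⟨m * k, Nat.one_le_iff_ne_zero.mpr (Nat.mul_ne_zero (by omega) (by omega)), ?_⟩
    have hval : ((m*k : ℕ):ℝ) * a = (m:ℝ) * (r:ℝ) + (m:ℝ) * d := by push_cast; ring
    have hmr1 : 1 ≤ (m:ℤ) * r + 1 := by
      have : (0:ℤ) ≤ (m:ℤ) * r := mul_nonneg (by positivity) hr0
      omega
    apply mem_wset ((m:ℤ) * r + 1) hmr1
    · rw [hval]; push_cast; linarith
    · rw [hval]; push_cast; linarith

lemma nmin_spec {τ : ℝ} (hτ0 : 0 < τ) (hτ1 : τ < 1) {a : ℝ} (ha : 0 < a) :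
    1 ≤ Nmin τ a ∧ ((Nmin τ a : ℝ) * a ∈ Wset τ) ∧
      ∀ k : ℕ, 1 ≤ k → k < Nmin τ a → (k:ℝ) * a ∉ Wset τ := by
  have hne : {k : ℕ | 1 ≤ k ∧ (k:ℝ)*a ∈ Wset τ}.Nonempty := by
    obtain ⟨k, h1, h2⟩ := exists_mult_mem hτ0 hτ1 ha
    exact ⟨k, h1, h2⟩
  have hmem := Nat.sInf_mem hne
  exact ⟨hmem.1, hmem.2, fun k hk1 hk2 h => (Nat.notMem_of_lt_sInf hk2) ⟨hk1, h⟩⟩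

lemma lamInf_anti {τ : ℝ} (hτ0 : 0 < τ) (hτ1 : τ < 1) {x y : ℝ} (hx : 0 < x) (hxy : x ≤ y) :
    lamInf τ y ≤ lamInf τ x := by
  have hy : 0 < y := hx.trans_le hxy
  obtain ⟨hN1, hNW, hNmin⟩ := nmin_spec hτ0 hτ1 hx
  obtain ⟨hK1, hKW, hKmin⟩ := nmin_spec hτ0 hτ1 hy
  set N := Nmin τ x with hNd
  set K := Nmin τ y with hKd
  set Mx := ⌈(N:ℝ)*x⌉ with hMxd
  set My := ⌈(K:ℝ)*y⌉ with hMyd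
  obtain ⟨hb1, hb2, hb3⟩ := wset_bounds hτ0 hNW
  obtain ⟨hc1, hc2, hc3⟩ := wset_bounds hτ0 hKW
  have hlog : 0 < Real.log 2 := Real.log_pos one_lt_two
  have hMx0 : (0:ℝ) < (Mx:ℝ) := by exact_mod_cast hb3
  have hMy0 : (0:ℝ) < (My:ℝ) := by exact_mod_cast hc3
  have hN0 : (1:ℝ) ≤ (N:ℝ) := by exact_mod_cast hN1
  have hK0 : (1:ℝ) ≤ (K:ℝ) := by exact_mod_cast hK1
  unfold lamInf
  rw [← hNd, ← hKd, ← hMxd, ← hMyd]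
  apply mul_le_mul_of_nonneg_right _ hlog.le
  rw [div_le_div_iff₀ hMy0 hMx0]
  rcases le_or_gt K N with hKN | hKN
  · have hKNr : (K:ℝ) ≤ (N:ℝ) := by exact_mod_cast hKN
    have hKxy : (K:ℝ)*x ≤ (K:ℝ)*y := by nlinarith
    have hcle : ⌈(K:ℝ)*x⌉ ≤ My := by rw [hMyd]; exact Int.ceil_le_ceil hKxy
    rcases eq_or_lt_of_le hKN with heq | hlt
    · have h5 : Mx ≤ My := by rw [hMxd, ← heq]; exact hcle
      have h5' : (Mx:ℝ) ≤ (My:ℝ) := by exact_mod_cast h5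
      nlinarith
    · have hKx : (K:ℝ)*x ∉ Wset τ := hNmin K hK1 hlt
      have hKx0 : 0 < (K:ℝ)*x := by positivity
      obtain ⟨hd1, hd2⟩ := between_of_not_wset hτ1.le hKx0 hKx
      have hcler : ((⌈(K:ℝ)*x⌉ : ℤ):ℝ) ≤ (My:ℝ) := by exact_mod_cast hcle
      have hNKr : (K:ℝ) + 1 ≤ (N:ℝ) := by exact_mod_cast hlt
      nlinarith [mul_le_mul_of_nonneg_left hcler (by linarith : (0:ℝ) ≤ (N:ℝ)),
        mul_lt_mul_of_pos_left hd2 (by linarith : (0:ℝ) < (N:ℝ)),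
        mul_le_mul_of_nonneg_left hb1 (by linarith : (0:ℝ) ≤ (K:ℝ))]
  · have hNy : (N:ℝ)*y ∉ Wset τ := hKmin N hN1 hKN
    have hNxy : (N:ℝ)*x ≤ (N:ℝ)*y := by nlinarith
    have hNyMx : (Mx:ℝ) < (N:ℝ)*y := by
      by_contra h
      push_neg at h
      exact hNy (mem_wset Mx hb3 (by linarith) h)
    have hKNr : (N:ℝ) ≤ (K:ℝ) := by exact_mod_cast hKN.le
    nlinarith [mul_le_mul_of_nonneg_left hc2 (by linarith : (0:ℝ) ≤ (N:ℝ)),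
      mul_lt_mul_of_pos_left hNyMx (by linarith : (0:ℝ) < (K:ℝ))]

lemma wset_compl_open {τ : ℝ} (hτ0 : 0 < τ) (hτ1 : τ < 1) : IsOpen (Wset τ)ᶜ := by
  rw [Metric.isOpen_iff]
  intro x hx
  rcases lt_or_ge x τ with h | h
  · refine ⟨τ - x, by linarith, fun y hy => ?_⟩
    rw [Metric.mem_ball, Real.dist_eq] at hy
    obtain ⟨hy1, hy2⟩ := abs_lt.mp hy
    exact not_wset_of_lt (by linarith)
  · have hx0 : 0 < x := hτ0.trans_le h
    obtain ⟨h1, h2⟩ := between_of_not_wset hτ1.le hx0 hx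
    refine ⟨min (x - ((⌈x⌉:ℝ) - 1)) (((⌈x⌉:ℝ) - 1 + τ) - x), lt_min (by linarith) (by linarith),
      fun y hy => ?_⟩
    rw [Metric.mem_ball, Real.dist_eq] at hy
    obtain ⟨hy1, hy2⟩ := abs_lt.mp hy
    have := min_le_left (x - ((⌈x⌉:ℝ) - 1)) (((⌈x⌉:ℝ) - 1 + τ) - x)
    have := min_le_right (x - ((⌈x⌉:ℝ) - 1)) (((⌈x⌉:ℝ) - 1 + τ) - x)
    exact not_wset_of_between (c := ⌈x⌉) (by linarith) (by linarith)

theorem stmt_3 (τ : ℝ) (hτ0 : 0 < τ) (hτ1 : τ < 1) (a : ℝ) (ha : 0 < a) :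
    ({x : ℝ | 0 < x ∧ lamInf τ x = lamInf τ a}).OrdConnected ∧
    ∃ ε > 0, Set.Ico a (a + ε) ⊆ {x : ℝ | 0 < x ∧ lamInf τ x = lamInf τ a} ∨
      Set.Ioc (a - ε) a ⊆ {x : ℝ | 0 < x ∧ lamInf τ x = lamInf τ a} := by
  constructor
  · refine ⟨?_⟩
    rintro p ⟨hp0, hpl⟩ q ⟨hq0, hql⟩ z hz
    refine ⟨hp0.trans_le hz.1, le_antisymm ?_ ?_⟩
    · rw [← hpl]; exact lamInf_anti hτ0 hτ1 hp0 hz.1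
    · rw [← hql]; exact lamInf_anti hτ0 hτ1 (hp0.trans_le hz.1) hz.2
  · obtain ⟨hN1, hNW, hNmin⟩ := nmin_spec hτ0 hτ1 ha
    set N := Nmin τ a with hNdef
    set M := ⌈(N:ℝ)*a⌉ with hMdef
    obtain ⟨hb1, hb2, hb3⟩ := wset_bounds hτ0 hNW
    have hNpos : (0:ℝ) < (N:ℝ) := by exact_mod_cast hN1
    have hS : ∃ δ > 0, ∀ a' : ℝ, |a' - a| < δ →
        ∀ k : ℕ, 1 ≤ k → k < N → (k:ℝ)*a' ∉ Wset τ := by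
      have hopen : IsOpen {b : ℝ | ∀ k ∈ Finset.Ico 1 N, (k:ℝ)*b ∉ Wset τ} := by
        have heq : {b : ℝ | ∀ k ∈ Finset.Ico 1 N, (k:ℝ)*b ∉ Wset τ}
            = ⋂ k ∈ Finset.Ico 1 N, ((fun b => (k:ℝ)*b) ⁻¹' (Wset τ)ᶜ) := by
          ext b; simp
        rw [heq]
        exact isOpen_biInter_finset fun k _ =>
          ((wset_compl_open hτ0 hτ1).preimage (continuous_const.mul continuous_id))
      have hmem : a ∈ {b : ℝ | ∀ k ∈ Finset.Ico 1 N, (k:ℝ)*b ∉ Wset τ} := by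
        intro k hk
        obtain ⟨hk1, hk2⟩ := Finset.mem_Ico.mp hk
        exact hNmin k hk1 hk2
      obtain ⟨δ, hδ0, hball⟩ := Metric.isOpen_iff.mp hopen a hmem
      refine ⟨δ, hδ0, fun a' h k hk1 hk2 => ?_⟩
      exact hball (by rwa [Metric.mem_ball, Real.dist_eq]) k (Finset.mem_Ico.mpr ⟨hk1, hk2⟩)
    obtain ⟨δ, hδ0, hδ⟩ := hS
    have key : ∀ a' : ℝ, 0 < a' → |a' - a| < δ → (M:ℝ) - 1 + τ ≤ (N:ℝ)*a' →
        (N:ℝ)*a' ≤ (M:ℝ) → lamInf τ a' = lamInf τ a := by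
      intro a' ha'0 hclose h1 h2
      have hW' : (N:ℝ)*a' ∈ Wset τ := mem_wset M hb3 h1 h2
      have hNeq : Nmin τ a' = N := by
        have hle : Nmin τ a' ≤ N := Nat.sInf_le ⟨hN1, hW'⟩
        rcases lt_or_eq_of_le hle with hlt | heq
        · obtain ⟨h1', h2', _⟩ := nmin_spec hτ0 hτ1 ha'0
          exact absurd h2' (hδ a' hclose _ h1' hlt)
        · exact heq
      have hceil : ⌈(N:ℝ)*a'⌉ = M := by
        rw [Int.ceil_eq_iff]
        exact ⟨by linarith, h2⟩
      unfold lamInf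
      rw [hNeq, ← hNdef, hceil, ← hMdef]
    rcases lt_or_eq_of_le hb2 with hlt | heq
    · set ε := min δ (((M:ℝ) - (N:ℝ)*a)/N) with hε
      have hε0 : 0 < ε := lt_min hδ0 (div_pos (by linarith) hNpos)
      refine ⟨ε, hε0, Or.inl ?_⟩
      rintro x ⟨hx1, hx2⟩
      have hx0 : 0 < x := ha.trans_le hx1
      have hεδ : ε ≤ δ := min_le_left _ _
      have hεM : ε ≤ ((M:ℝ) - (N:ℝ)*a)/N := min_le_right _ _
      have hNε : (N:ℝ)*ε ≤ (M:ℝ) - (N:ℝ)*a := by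
        rw [le_div_iff₀ hNpos] at hεM; nlinarith
      refine ⟨hx0, key x hx0 ?_ ?_ ?_⟩
      · rw [abs_of_nonneg (by linarith)]; linarith
      · nlinarith
      · nlinarith
    · set ε := min (min δ a) ((1-τ)/N) with hε
      have hε0 : 0 < ε := lt_min (lt_min hδ0 ha) (div_pos (by linarith) hNpos)
      refine ⟨ε, hε0, Or.inr ?_⟩
      rintro x ⟨hx1, hx2⟩
      have hεδ : ε ≤ δ := (min_le_left _ _).trans (min_le_left _ _)
      have hεa : ε ≤ a := (min_le_left _ _).trans (min_le_right _ _)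
      have hετ : ε ≤ (1-τ)/N := min_le_right _ _
      have hNε : (N:ℝ)*ε ≤ 1 - τ := by
        rw [le_div_iff₀ hNpos] at hετ; nlinarith
      have hx0 : 0 < x := by linarith
      refine ⟨hx0, key x hx0 ?_ ?_ ?_⟩
      · rw [abs_of_nonpos (by linarith)]; linarith
      · nlinarith
      · nlinarith
end

section
/- Let 0 < τ < 1, λ^∞(a) = (N_a/⌈N_a a⌉) log 2 with N_a = min{k ≥ 1 : k·a ∈ [τ,1]+ℕ}, and define E_τ = {a > 0 : a = sup I_a} where I_a = {x > 0 : λ^∞(x) = λ^∞(a)}. If a ∈ E_τ, then N_a·a is an integer. -/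
open Real Set

/-- Positive integers belong to `Wset τ` when `τ ≤ 1`. -/
lemma nat_mem_Wset {τ : ℝ} (hτ1 : τ ≤ 1) {m : ℕ} (hm : 1 ≤ m) : (m : ℝ) ∈ Wset τ := by
  refine ⟨m - 1, ?_, ?_⟩ <;>
  · have : ((m - 1 : ℕ) : ℝ) = (m : ℝ) - 1 := by
      push_cast [Nat.cast_sub hm]; ring
    rw [this]; linarith

/-- A positive real not in `Wset τ` lies strictly between `⌊y⌋` and `⌊y⌋ + τ`. -/
lemma gap_of_notMem_Wset {τ : ℝ} (hτ0 : 0 < τ) (hτ1 : τ ≤ 1) {y : ℝ} (hy : 0 < y)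
    (h : y ∉ Wset τ) : ((⌊y⌋ : ℝ) < y ∧ y < (⌊y⌋ : ℝ) + τ) := by
  have hF0 : 0 ≤ ⌊y⌋ := Int.floor_nonneg.mpr hy.le
  have hfl : (⌊y⌋ : ℝ) ≤ y := Int.floor_le y
  have hlt : y < (⌊y⌋ : ℝ) + 1 := Int.lt_floor_add_one y
  constructor
  · rcases lt_or_eq_of_le hfl with h' | h'
    · exact h'
    · exfalso
      have h1 : 1 ≤ ⌊y⌋ := by
        have h0 : (0 : ℝ) < (⌊y⌋ : ℝ) := by rw [h']; exact hy
        have : 0 < ⌊y⌋ := by exact_mod_cast h0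
        omega
      have hmem := nat_mem_Wset hτ1 (m := ⌊y⌋.toNat) (by omega)
      have hcast : ((⌊y⌋.toNat : ℕ) : ℝ) = y := by
        rw [show ((⌊y⌋.toNat : ℕ) : ℝ) = ((⌊y⌋ : ℤ) : ℝ) by
          exact_mod_cast Int.toNat_of_nonneg hF0, h']
      rw [hcast] at hmem
      exact h hmem
  · by_contra hc
    push_neg at hc
    have hcast : ((⌊y⌋.toNat : ℕ) : ℝ) = (⌊y⌋ : ℝ) := by
      exact_mod_cast Int.toNat_of_nonneg hF0
    exact h ⟨⌊y⌋.toNat, by rw [hcast]; linarith, by rw [hcast]; linarith⟩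

/-- Conversely, a real strictly between a nonneg integer `F` and `F + τ` is not in `Wset τ`. -/
lemma notMem_Wset_of_gap {τ : ℝ} {F : ℤ} (hF : 0 ≤ F) {y : ℝ}
    (h1 : (F : ℝ) < y) (h2 : y < (F : ℝ) + τ) : y ∉ Wset τ := by
  rintro ⟨m, hm1, hm2⟩
  rcases le_or_gt F (m : ℤ) with hc | hc
  · have : (F : ℝ) ≤ (m : ℝ) := by exact_mod_cast hc
    linarith
  · have : (m : ℝ) + 1 ≤ (F : ℝ) := by exact_mod_cast hc
    linarith

theorem stmt_5 (τ : ℝ) (hτ0 : 0 < τ) (hτ1 : τ < 1) (a : ℝ) (ha : 0 < a)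
    (hE : a = sSup {x : ℝ | 0 < x ∧ lamInf τ x = lamInf τ a}) :
    ∃ m : ℤ, (Nmin τ a : ℝ) * a = (m : ℝ) := by
  by_contra hcon
  push_neg at hcon
  set N := Nmin τ a with hNdef
  -- The defining set is nonempty (otherwise N = 0 and N·a = 0 is an integer)
  have hSne : {k : ℕ | 1 ≤ k ∧ (k : ℝ) * a ∈ Wset τ}.Nonempty := by
    by_contra h
    rw [Set.not_nonempty_iff_eq_empty] at h
    have hN0 : N = 0 := by rw [hNdef, Nmin, h, Nat.sInf_empty]
    exact (hcon 0) (by rw [hN0]; simp)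
  have hNmem : N ∈ {k : ℕ | 1 ≤ k ∧ (k : ℝ) * a ∈ Wset τ} := Nat.sInf_mem hSne
  obtain ⟨hN1, n, hn1, hn2⟩ := hNmem
  have hNpos : (0 : ℝ) < (N : ℝ) := by exact_mod_cast hN1
  have hNa_ne : (N : ℝ) * a ≠ (n : ℝ) + 1 := fun h => hcon ((n : ℤ) + 1) (by push_cast; linarith)
  have hlt : (N : ℝ) * a < (n : ℝ) + 1 := lt_of_le_of_ne hn2 hNa_ne
  have hgt : (n : ℝ) < (N : ℝ) * a := by linarith
  -- small multiples avoid Wset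
  have hknot : ∀ k : ℕ, 1 ≤ k → k < N → (k : ℝ) * a ∉ Wset τ := by
    intro k hk1 hkN hmem
    have : Nmin τ a ≤ k :=
      Nat.sInf_le (show k ∈ {k : ℕ | 1 ≤ k ∧ (k : ℝ) * a ∈ Wset τ} from ⟨hk1, hmem⟩)
    omega
  have hkgap : ∀ k : ℕ, 1 ≤ k → k < N →
      ((⌊(k : ℝ) * a⌋ : ℝ) < (k : ℝ) * a ∧ (k : ℝ) * a < (⌊(k : ℝ) * a⌋ : ℝ) + τ) := by
    intro k hk1 hkN
    have hkpos : (0 : ℝ) < (k : ℝ) * a :=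
      mul_pos (by exact_mod_cast hk1) ha
    exact gap_of_notMem_Wset hτ0 hτ1.le hkpos (hknot k hk1 hkN)
  -- choose ε
  classical
  have hTne : (Finset.Icc 1 N).Nonempty := ⟨N, by simp [hN1]⟩
  set f : ℕ → ℝ := fun k =>
    if k = N then ((n : ℝ) + 1 - (N : ℝ) * a) / (N : ℝ)
    else ((⌊(k : ℝ) * a⌋ : ℝ) + τ - (k : ℝ) * a) / (k : ℝ) with hf
  set ε : ℝ := (Finset.Icc 1 N).inf' hTne f with hε
  have hεpos : 0 < ε := by
    rw [hε, Finset.lt_inf'_iff]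
    intro k hk
    simp only [Finset.mem_Icc] at hk
    rw [hf]
    by_cases hkN : k = N
    · simp only [hkN, if_pos rfl]
      exact div_pos (by linarith) hNpos
    · have hkN' : k < N := lt_of_le_of_ne hk.2 hkN
      simp only [if_neg hkN]
      have := hkgap k hk.1 hkN'
      exact div_pos (by linarith [this.2]) (by exact_mod_cast hk.1)
  set x : ℝ := a + ε / 2 with hx
  have hax : a < x := by rw [hx]; linarith
  -- per-k bounds
  have hbound : ∀ k : ℕ, 1 ≤ k → k ≤ N → (k : ℝ) * x < (k : ℝ) * a + (k : ℝ) * f k := by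
    intro k hk1 hkN
    have hεk : ε ≤ f k := Finset.inf'_le f (by simp [Finset.mem_Icc, hk1, hkN])
    have hkpos : (0 : ℝ) < (k : ℝ) := by exact_mod_cast hk1
    rw [hx]
    have : (k : ℝ) * (ε / 2) < (k : ℝ) * f k := by
      calc (k : ℝ) * (ε / 2) < (k : ℝ) * ε := by
            apply mul_lt_mul_of_pos_left (by linarith) hkpos
        _ ≤ (k : ℝ) * f k := mul_le_mul_of_nonneg_left hεk hkpos.le
    linarith [this, (by ring : (k : ℝ) * (a + ε / 2) = (k : ℝ) * a + (k : ℝ) * (ε / 2))]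
  -- N x < n + 1
  have hNx_lt : (N : ℝ) * x < (n : ℝ) + 1 := by
    have hb := hbound N hN1 le_rfl
    have hfN : f N = ((n : ℝ) + 1 - (N : ℝ) * a) / (N : ℝ) := by simp [hf]
    rw [hfN, mul_div_cancel₀ _ (ne_of_gt hNpos)] at hb
    linarith
  have hNx_ge : (n : ℝ) + τ ≤ (N : ℝ) * x := by
    have : (N : ℝ) * a ≤ (N : ℝ) * x := mul_le_mul_of_nonneg_left hax.le hNpos.le
    linarith
  have hNx_gt : (n : ℝ) < (N : ℝ) * x := by linarith
  -- k x not in Wset for 1 ≤ k < N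
  have hkxnot : ∀ k : ℕ, 1 ≤ k → k < N → (k : ℝ) * x ∉ Wset τ := by
    intro k hk1 hkN
    have hg := hkgap k hk1 hkN
    have hb := hbound k hk1 hkN.le
    have hkne : k ≠ N := Nat.ne_of_lt hkN
    have hfk : f k = ((⌊(k : ℝ) * a⌋ : ℝ) + τ - (k : ℝ) * a) / (k : ℝ) := by
      simp [hf, hkne]
    have hkpos : (0 : ℝ) < (k : ℝ) := by exact_mod_cast hk1
    rw [hfk, mul_div_cancel₀ _ (ne_of_gt hkpos)] at hb
    have hup : (k : ℝ) * x < (⌊(k : ℝ) * a⌋ : ℝ) + τ := by linarith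
    have hlo : (⌊(k : ℝ) * a⌋ : ℝ) < (k : ℝ) * x := by
      have : (k : ℝ) * a ≤ (k : ℝ) * x := mul_le_mul_of_nonneg_left hax.le hkpos.le
      linarith [hg.1]
    have hF0 : 0 ≤ ⌊(k : ℝ) * a⌋ :=
      Int.floor_nonneg.mpr (mul_pos hkpos ha).le
    exact notMem_Wset_of_gap hF0 hlo hup
  -- Nmin τ x = N
  have hNx_memW : (N : ℝ) * x ∈ Wset τ := ⟨n, hNx_ge, hNx_lt.le⟩
  have hNminx : Nmin τ x = N := by
    have hmem : N ∈ {k : ℕ | 1 ≤ k ∧ (k : ℝ) * x ∈ Wset τ} := ⟨hN1, hNx_memW⟩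
    have hle : Nmin τ x ≤ N := Nat.sInf_le hmem
    rcases lt_or_eq_of_le hle with hl | he
    · exfalso
      have hmem' : Nmin τ x ∈ {k : ℕ | 1 ≤ k ∧ (k : ℝ) * x ∈ Wset τ} :=
        Nat.sInf_mem ⟨N, hmem⟩
      exact hkxnot _ hmem'.1 hl hmem'.2
    · exact he
  -- ceilings agree
  have hceil_a : ⌈(N : ℝ) * a⌉ = (n : ℤ) + 1 := by
    rw [Int.ceil_eq_iff]
    constructor <;> push_cast <;> linarith
  have hceil_x : ⌈(N : ℝ) * x⌉ = (n : ℤ) + 1 := by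
    rw [Int.ceil_eq_iff]
    constructor <;> push_cast <;> linarith
  -- lamInf τ x = lamInf τ a
  have hlam : lamInf τ x = lamInf τ a := by
    rw [lamInf, lamInf, hNminx, ← hNdef, hceil_a, hceil_x]
  -- contradiction with sSup
  set SE : Set ℝ := {y : ℝ | 0 < y ∧ lamInf τ y = lamInf τ a} with hSE
  have hxSE : x ∈ SE := ⟨by linarith, hlam⟩
  have hbdd : BddAbove SE := by
    by_contra hb
    rw [csSup_of_not_bddAbove hb, Real.sSup_empty] at hE
    linarith
  have : x ≤ sSup SE := le_csSup hbdd hxSE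
  rw [← hE] at this
  linarith
end

section
/- Let 0 < τ < 1 and define E_τ = {a > 0 : a = sup{x : λ^∞(x) = λ^∞(a)}}, where λ^∞(a) = (N_a/⌈N_a a⌉) log 2 and N_a = min{k ≥ 1 : k·a ∈ [τ,1]+ℕ}. Then E_τ is a discrete subset of (0,∞): every a ∈ E_τ has a neighborhood containing no other point of E_τ. -/
/-!
A point `a` of `E_τ` is the right end of its level set, so `λ^∞` is not constant on any
interval `[a, a + δ)`. If `N_a a` were not an integer, slightly increasing `a` would keep the
multiples `k a`, `k < N_a`, outside `W_τ` and `N_a a` inside `W_τ` with the same ceiling, hence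
would keep `λ^∞`; so `a = m / N_a`. Minimality of `N_a` forces `gcd(m, N_a) = 1`, and then some
`k < N_a` has `k a ≡ -1/N_a (mod 1)`, which lies in `W_τ` unless `N_a (1 - τ) < 1`. Thus `E_τ`
consists of fractions with denominators below `1 / (1 - τ)`, any two of which are at least
`(1 - τ)²` apart.
-/

open Real Set

open Filter Topology

section Wset

variable {τ : ℝ}

theorem natCast_mem_Wset (hτ : τ ≤ 1) {m : ℕ} (hm : 1 ≤ m) : (m : ℝ) ∈ Wset τ :=
  ⟨m - 1, by push_cast [Nat.cast_sub hm]; linarith, by push_cast [Nat.cast_sub hm]; linarith⟩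

theorem add_natCast_mem_Wset_iff {x : ℝ} (hx : 0 < x) (j : ℕ) :
    x + j ∈ Wset τ ↔ x ∈ Wset τ := by
  constructor
  · rintro ⟨n, hn, hn'⟩
    have hjn : j ≤ n := Nat.lt_succ_iff.mp (by exact_mod_cast (by linarith : (j : ℝ) < n + 1))
    exact ⟨n - j, by push_cast [Nat.cast_sub hjn]; linarith,
      by push_cast [Nat.cast_sub hjn]; linarith⟩
  · rintro ⟨n, hn, hn'⟩
    exact ⟨n + j, by push_cast; linarith, by push_cast; linarith⟩

theorem notMem_Wset_of_le_of_lt {y z : ℝ} (hyz : y ≤ z) (hz : z < ⌈y⌉ - 1 + τ) :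
    z ∉ Wset τ := by
  rintro ⟨n, hn, hn'⟩
  have hlt : (n : ℤ) + 1 < ⌈y⌉ := by exact_mod_cast (by linarith : (n : ℝ) + 1 < ⌈y⌉)
  have hle : (n : ℝ) + 1 + 1 ≤ ⌈y⌉ := by exact_mod_cast hlt
  linarith [Int.ceil_lt_add_one y]

theorem lt_ceil_sub_one_add_of_notMem_Wset {y : ℝ} (hy : 0 < y) (h : y ∉ Wset τ) :
    y < ⌈y⌉ - 1 + τ := by
  by_contra! hle
  have hceil : 1 ≤ ⌈y⌉ := Int.one_le_ceil_iff.mpr hy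
  refine h ⟨(⌈y⌉ - 1).toNat, ?_, ?_⟩ <;>
    rw [show (((⌈y⌉ - 1).toNat : ℕ) : ℝ) = ⌈y⌉ - 1 by
      exact_mod_cast Int.toNat_of_nonneg (by omega : 0 ≤ ⌈y⌉ - 1)]
  · exact hle
  · linarith [Int.le_ceil y]

theorem eventually_notMem_Wset {y : ℝ} (hy : 0 < y) (h : y ∉ Wset τ) :
    ∀ᶠ z in 𝓝[≥] y, z ∉ Wset τ := by
  filter_upwards [Ico_mem_nhdsGE (lt_ceil_sub_one_add_of_notMem_Wset hy h)] with z hz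
  exact notMem_Wset_of_le_of_lt hz.1 hz.2

theorem natCast_div_mem_Wset {p N : ℕ} (hN : 0 < N) (h : τ * N ≤ (p % N : ℕ)) :
    (p : ℝ) / N ∈ Wset τ := by
  have hNR : (0 : ℝ) < N := by exact_mod_cast hN
  have hp : (p : ℝ) = N * (p / N : ℕ) + (p % N : ℕ) := by
    exact_mod_cast (Nat.div_add_mod p N).symm
  have hmod : ((p % N : ℕ) : ℝ) ≤ N := by exact_mod_cast (Nat.mod_lt p hN).le
  refine ⟨p / N, ?_, ?_⟩
  · rw [le_div_iff₀ hNR]; nlinarith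
  · rw [div_le_iff₀ hNR]; nlinarith

end Wset

section Nmin

variable {τ a : ℝ}

theorem natCast_Nmin_mul_mem_Wset (h : 1 ≤ Nmin τ a) : (Nmin τ a : ℝ) * a ∈ Wset τ :=
  (Nat.sInf_mem (Nat.nonempty_of_pos_sInf h)).2

theorem natCast_mul_notMem_Wset_of_lt_Nmin {k : ℕ} (hk1 : 1 ≤ k) (hk : k < Nmin τ a) :
    (k : ℝ) * a ∉ Wset τ :=
  fun h ↦ Nat.notMem_of_lt_sInf hk ⟨hk1, h⟩

theorem Nmin_eq_of_forall_lt {N : ℕ} (hN : 1 ≤ N) (hmem : (N : ℝ) * a ∈ Wset τ)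
    (hlt : ∀ k, 1 ≤ k → k < N → (k : ℝ) * a ∉ Wset τ) : Nmin τ a = N :=
  le_antisymm (Nat.sInf_le ⟨hN, hmem⟩)
    (le_csInf ⟨N, hN, hmem⟩ fun k hk ↦ not_lt.mp fun hkN ↦ hlt k hk.1 hkN hk.2)

theorem Nmin_add_one (ha : 0 < a) : Nmin τ (a + 1) = Nmin τ a := by
  unfold Nmin
  congr 1
  ext k
  refine and_congr_right fun hk ↦ ?_
  have hka : 0 < (k : ℝ) * a := mul_pos (by exact_mod_cast hk) ha
  rw [mul_add_one, add_natCast_mem_Wset_iff hka]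

theorem lamInf_eq_zero_of_Nmin_eq_zero (h : Nmin τ a = 0) : lamInf τ a = 0 := by
  simp [lamInf, h]

end Nmin

section levelSet

variable {τ a : ℝ}

def levelSet (τ a : ℝ) : Set ℝ := {x | 0 < x ∧ lamInf τ x = lamInf τ a}

theorem le_of_mem_levelSet (ha0 : 0 < a) (ha : a = sSup (levelSet τ a)) {x : ℝ}
    (hx : x ∈ levelSet τ a) : x ≤ a := by
  have hbdd : BddAbove (levelSet τ a) := by
    by_contra hbdd
    rw [Real.sSup_of_not_bddAbove hbdd] at ha
    exact ha0.ne' ha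
  exact ha ▸ le_csSup hbdd hx

theorem one_le_Nmin_of_eq_sSup (ha0 : 0 < a) (ha : a = sSup (levelSet τ a)) :
    1 ≤ Nmin τ a := by
  by_contra! h
  have h0 : Nmin τ a = 0 := by omega
  have hmem : a + 1 ∈ levelSet τ a := ⟨by linarith, by
    rw [lamInf_eq_zero_of_Nmin_eq_zero h0,
      lamInf_eq_zero_of_Nmin_eq_zero ((Nmin_add_one ha0).trans h0)]⟩
  linarith [le_of_mem_levelSet ha0 ha hmem]

theorem exists_gt_lamInf_eq (ha0 : 0 < a) (hN : 1 ≤ Nmin τ a)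
    (hint : (Nmin τ a : ℝ) * a ≠ ⌈(Nmin τ a : ℝ) * a⌉) :
    ∃ x > a, lamInf τ x = lamInf τ a := by
  set N := Nmin τ a
  obtain ⟨n, hn, hn'⟩ := natCast_Nmin_mul_mem_Wset hN
  have hlt : (N : ℝ) * a < ⌈(N : ℝ) * a⌉ := lt_of_le_of_ne (Int.le_ceil _) hint
  have hmul (k : ℕ) : Tendsto (fun x ↦ (k : ℝ) * x) (𝓝[>] a) (𝓝[≥] ((k : ℝ) * a)) :=
    (continuous_const_mul (k : ℝ)).continuousWithinAt.tendsto_nhdsWithin fun x hx ↦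
      show (k : ℝ) * a ≤ k * x from mul_le_mul_of_nonneg_left (le_of_lt hx) k.cast_nonneg
  have hsmall : ∀ᶠ x in 𝓝[>] a, ∀ k ∈ Finset.Ico 1 N, (k : ℝ) * x ∉ Wset τ := by
    rw [eventually_all_finset]
    intro k hk
    rw [Finset.mem_Ico] at hk
    have hka : 0 < (k : ℝ) * a := mul_pos (by exact_mod_cast hk.1) ha0
    exact hmul k (eventually_notMem_Wset hka (natCast_mul_notMem_Wset_of_lt_Nmin hk.1 hk.2))
  have hlast : ∀ᶠ x in 𝓝[>] a, (N : ℝ) * x ∈ Ico ((N : ℝ) * a) ⌈(N : ℝ) * a⌉ :=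
    hmul N (Ico_mem_nhdsGE hlt)
  obtain ⟨x, hks, hNx, hxa⟩ := (hsmall.and (hlast.and self_mem_nhdsWithin)).exists
  have hceil : ⌈(N : ℝ) * x⌉ = ⌈(N : ℝ) * a⌉ :=
    Int.ceil_eq_iff.mpr ⟨by linarith [Int.ceil_lt_add_one ((N : ℝ) * a), hNx.1], hNx.2.le⟩
  have hceil_le : (⌈(N : ℝ) * a⌉ : ℝ) ≤ n + 1 := by
    exact_mod_cast Int.ceil_le.mpr (by push_cast; exact hn')
  have hNx_mem : (N : ℝ) * x ∈ Wset τ := ⟨n, by linarith [hNx.1], by linarith [hNx.2]⟩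
  have hNmin : Nmin τ x = N := Nmin_eq_of_forall_lt hN hNx_mem
    fun k hk1 hkN ↦ hks k (Finset.mem_Ico.mpr ⟨hk1, hkN⟩)
  exact ⟨x, hxa, by rw [lamInf, lamInf, hNmin, hceil]⟩

theorem natCast_Nmin_mul_eq_ceil (ha0 : 0 < a) (ha : a = sSup (levelSet τ a)) :
    (Nmin τ a : ℝ) * a = ⌈(Nmin τ a : ℝ) * a⌉ := by
  by_contra hint
  obtain ⟨x, hxa, hx⟩ := exists_gt_lamInf_eq ha0 (one_le_Nmin_of_eq_sSup ha0 ha) hint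
  exact (le_of_mem_levelSet ha0 ha ⟨ha0.trans hxa, hx⟩).not_gt hxa

end levelSet

section denominator

variable {τ a : ℝ}

theorem coprime_Nmin (hτ : τ ≤ 1) (hN : 0 < Nmin τ a) {m : ℕ} (hm : 1 ≤ m)
    (h : (Nmin τ a : ℝ) * a = m) : Nat.Coprime m (Nmin τ a) := by
  set N := Nmin τ a
  by_contra hcop
  set d := Nat.gcd m N
  have hd : 1 < d := lt_of_le_of_ne (Nat.gcd_pos_of_pos_left N hm) (Ne.symm hcop)
  have hdN := Nat.gcd_dvd_right m N
  have hdm := Nat.gcd_dvd_left m N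
  have hk1 : 1 ≤ N / d := Nat.div_pos (Nat.le_of_dvd hN hdN) (by omega)
  have hka : ((N / d : ℕ) : ℝ) * a = (m / d : ℕ) := by
    have hdR : (d : ℝ) ≠ 0 := by exact_mod_cast (by omega : d ≠ 0)
    rw [Nat.cast_div hdN hdR, Nat.cast_div hdm hdR, div_mul_eq_mul_div, h]
  refine natCast_mul_notMem_Wset_of_lt_Nmin hk1 (Nat.div_lt_self hN hd) ?_
  rw [hka]
  exact natCast_mem_Wset hτ (Nat.div_pos (Nat.le_of_dvd (by omega) hdm) (by omega))

theorem natCast_Nmin_mul_one_sub_lt_one (hτ0 : 0 < τ) (hτ1 : τ ≤ 1) (hN : 0 < Nmin τ a)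
    {m : ℕ} (hm : 1 ≤ m) (h : (Nmin τ a : ℝ) * a = m) :
    (Nmin τ a : ℝ) * (1 - τ) < 1 := by
  have hcop := coprime_Nmin hτ1 hN hm h
  set N := Nmin τ a
  obtain hN1 | hN2 : N = 1 ∨ 2 ≤ N := by omega
  · rw [hN1]; push_cast; linarith
  by_contra! hle
  -- as `m` is a unit mod `N`, some `k < N` puts `k * a` at distance `1/N` below an integer
  obtain ⟨k, hkN, hk⟩ := Nat.exists_mul_mod_eq_of_coprime (N - 1) hcop (by omega)
  rw [Nat.mod_eq_of_lt (show N - 1 < N by omega)] at hk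
  have hk1 : 1 ≤ k := Nat.pos_of_ne_zero fun h0 ↦ by simp [h0] at hk; omega
  have hNR : (N : ℝ) ≠ 0 := by exact_mod_cast hN.ne'
  have hka : (k : ℝ) * a = ((m * k : ℕ) : ℝ) / N := by
    rw [eq_div_iff hNR, Nat.cast_mul, ← h]; ring
  refine natCast_mul_notMem_Wset_of_lt_Nmin hk1 hkN ?_
  rw [hka]
  refine natCast_div_mem_Wset hN ?_
  rw [hk, Nat.cast_sub (by omega)]
  push_cast
  linarith

theorem exists_natCast_mul_eq_of_eq_sSup (hτ0 : 0 < τ) (hτ1 : τ ≤ 1) (ha0 : 0 < a)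
    (ha : a = sSup (levelSet τ a)) :
    ∃ N m : ℕ, 0 < N ∧ (N : ℝ) * (1 - τ) < 1 ∧ (N : ℝ) * a = m := by
  have hN := one_le_Nmin_of_eq_sSup ha0 ha
  have hceil := natCast_Nmin_mul_eq_ceil ha0 ha
  set N := Nmin τ a
  have hpos : 0 < ⌈(N : ℝ) * a⌉ := Int.ceil_pos.mpr (mul_pos (by exact_mod_cast hN) ha0)
  have hm : (N : ℝ) * a = (⌈(N : ℝ) * a⌉.toNat : ℕ) := by
    rw [hceil, Int.ceil_intCast]; exact_mod_cast (Int.toNat_of_nonneg hpos.le).symm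
  exact ⟨N, _, hN, natCast_Nmin_mul_one_sub_lt_one hτ0 hτ1 hN (by omega) hm, hm⟩

end denominator

theorem one_le_mul_mul_abs_sub {a b : ℝ} {N N' m m' : ℕ} (hN : 0 < N) (hN' : 0 < N')
    (ha : (N : ℝ) * a = m) (hb : (N' : ℝ) * b = m') (hab : a ≠ b) :
    1 ≤ (N : ℝ) * N' * |a - b| := by
  have hNN : (0 : ℝ) < N * N' := by positivity
  have hz : (N : ℝ) * N' * (a - b) = ((N' * m - N * m' : ℤ) : ℝ) := by
    push_cast; linear_combination (N' : ℝ) * ha - (N : ℝ) * hb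
  have hz0 : (N' * m - N * m' : ℤ) ≠ 0 := by
    rintro h0
    rw [h0, Int.cast_zero, mul_eq_zero] at hz
    exact hab (sub_eq_zero.mp (hz.resolve_left hNN.ne'))
  rw [← abs_of_pos hNN, ← abs_mul, hz]
  exact_mod_cast Int.one_le_abs hz0

theorem stmt_6 (τ : ℝ) (hτ0 : 0 < τ) (hτ1 : τ < 1) :
    ∀ a ∈ {a : ℝ | 0 < a ∧ a = sSup {x : ℝ | 0 < x ∧ lamInf τ x = lamInf τ a}},
      ∃ ε > 0, ∀ b ∈ {a : ℝ | 0 < a ∧ a = sSup {x : ℝ | 0 < x ∧ lamInf τ x = lamInf τ a}},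
        |b - a| < ε → b = a := by
  rintro a ⟨ha0, ha⟩
  obtain ⟨N, m, hN, hNτ, hNa⟩ := exists_natCast_mul_eq_of_eq_sSup hτ0 hτ1.le ha0 ha
  refine ⟨(1 - τ) ^ 2, pow_pos (sub_pos.mpr hτ1) 2, ?_⟩
  rintro b ⟨hb0, hb⟩ hab
  obtain ⟨N', m', hN', hNτ', hNb⟩ := exists_natCast_mul_eq_of_eq_sSup hτ0 hτ1.le hb0 hb
  by_contra hne
  have hNN : (0 : ℝ) < N' * N := by positivity
  have := calc
    1 ≤ (N' : ℝ) * N * |b - a| := one_le_mul_mul_abs_sub hN' hN hNb hNa hne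
    _ < N' * N * (1 - τ) ^ 2 := mul_lt_mul_of_pos_left hab hNN
    _ = (N' * (1 - τ)) * (N * (1 - τ)) := by ring
    _ < 1 * 1 := mul_lt_mul'' hNτ' hNτ (by nlinarith) (by nlinarith)
  linarith
end

section
/- Let 0 < τ < 1 with τ/1 < 1/2, and let 0 < a < 1. Then λ^∞(a) = ⌈τ/a⌉ · log 2, where λ^∞(a) = (N_a/⌈N_a a⌉) log 2 and N_a = min{k ≥ 1 : k·a ∈ [τ,1]+ℕ}. -/
open Real Set

theorem stmt_7 (τ : ℝ) (hτ0 : 0 < τ) (hτ2 : τ < 1 / 2) (a : ℝ) (ha : 0 < a) (ha1 : a < 1) :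
    lamInf τ a = ((⌈τ / a⌉ : ℤ) : ℝ) * Real.log 2 := by
  set N : ℕ := (⌈τ / a⌉ : ℤ).toNat with hNdef
  have hτa : 0 < τ / a := div_pos hτ0 ha
  have hceil_pos : (1 : ℤ) ≤ ⌈τ / a⌉ := Int.ceil_pos.mpr hτa
  have hNcast : ((N : ℤ)) = ⌈τ / a⌉ := Int.toNat_of_nonneg (by linarith)
  have hN1 : 1 ≤ N := by omega
  have hNge : τ / a ≤ (N : ℝ) := by
    have := Int.le_ceil (τ / a)
    rw [← hNcast] at this; exact_mod_cast this
  have hNaτ : τ ≤ (N : ℝ) * a := by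
    have := (div_le_iff₀ ha).mp hNge; linarith
  -- N * a ≤ 1
  have hNa1 : (N : ℝ) * a ≤ 1 := by
    rcases le_or_gt τ a with hca | hca
    · -- then τ/a ≤ 1 so N = 1
      have : ⌈τ / a⌉ ≤ 1 := Int.ceil_le.mpr (by push_cast; rw [div_le_one ha]; linarith)
      have hNeq : N = 1 := by omega
      rw [hNeq]; simpa using ha1.le
    · have hlt : ((N : ℝ)) < τ / a + 1 := by
        have := Int.ceil_lt_add_one (τ / a)
        rw [← hNcast] at this; exact_mod_cast this
      have : (N : ℝ) * a < (τ / a + 1) * a := by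
        exact mul_lt_mul_of_pos_right hlt ha
      have h2 : (τ / a + 1) * a = τ + a := by field_simp
      nlinarith
  have hNa0 : 0 < (N : ℝ) * a := by positivity
  -- membership
  have hmem : N ∈ {k : ℕ | 1 ≤ k ∧ (k : ℝ) * a ∈ Wset τ} := by
    refine ⟨hN1, ⟨0, by simpa using hNaτ, by simpa using hNa1⟩⟩
  -- minimality
  have hmin : ∀ k ∈ {k : ℕ | 1 ≤ k ∧ (k : ℝ) * a ∈ Wset τ}, N ≤ k := by
    rintro k ⟨hk1, n, hn1, hn2⟩
    by_contra hlt
    push_neg at hlt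
    have hkN : (k : ℤ) < ⌈τ / a⌉ := by omega
    have : (k : ℝ) < τ / a := by
      have := Int.lt_ceil.mp hkN; exact_mod_cast this
    have hka : (k : ℝ) * a < τ := (lt_div_iff₀ ha).mp this
    -- so n = 0 impossible; n ≥ 1 impossible since k*a < τ < 1 ≤ n + τ
    rcases Nat.eq_zero_or_pos n with h0 | hpos
    · rw [h0] at hn1; simp at hn1; linarith
    · have : (1 : ℝ) ≤ (n : ℝ) := by exact_mod_cast hpos
      have hk0 : (0:ℝ) < (k:ℝ) * a := by positivity
      linarith
  have hNmin : Nmin τ a = N :=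
    le_antisymm (Nat.sInf_le hmem) (le_csInf ⟨N, hmem⟩ hmin)
  have hceil1 : (⌈(Nmin τ a : ℝ) * a⌉ : ℤ) = 1 := by
    rw [hNmin]
    exact Int.ceil_eq_iff.mpr ⟨by push_cast; linarith, by push_cast; linarith⟩
  rw [lamInf, hceil1, hNmin, ← hNcast]
  push_cast
  ring
end

section
/- There exist division rates K¹ ≤ K² (pointwise, nonnegative) in the two-compartment periodic ODE model dP/dt = M(t)P with M(t) = χ₁(t)M_a + χ₂(t)M_b for which the growth rates satisfy λ_F¹ > λ_F². Concretely: with α ∈ (0,1) fixed, a₂ = b₂ = 0, and a₁ > 0 fixed, the map b₁ ↦ λ_F(b₁) = max(αa₁ − (1−α)b₁, 0) is nonincreasing in b₁, and strictly decreasing on [0, αa₁/(1−α)); so increasing the division rate b₁ strictly decreases the growth rate when αa₁ − (1−α)b₁ > 0. -/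
open Real Set

theorem stmt_9 (α a₁ : ℝ) (hα : α ∈ Set.Ioo (0 : ℝ) 1) (ha₁ : 0 < a₁) :
    AntitoneOn (fun b₁ : ℝ => max (α * a₁ - (1 - α) * b₁) 0) (Set.Ici 0) ∧
    StrictAntiOn (fun b₁ : ℝ => max (α * a₁ - (1 - α) * b₁) 0)
      (Set.Ico 0 (α * a₁ / (1 - α))) := by
  obtain ⟨hα0, hα1⟩ := hα
  have h1 : (0:ℝ) < 1 - α := by linarith
  constructor
  · intro x _ y _ hxy
    have : α * a₁ - (1 - α) * y ≤ α * a₁ - (1 - α) * x := by nlinarith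
    exact max_le_max this le_rfl
  · intro x hx y hy hxy
    have hxpos : 0 < α * a₁ - (1 - α) * x := by
      have := (lt_div_iff₀ h1).mp hx.2
      nlinarith
    have hypos : 0 < α * a₁ - (1 - α) * y := by
      have := (lt_div_iff₀ h1).mp hy.2
      nlinarith
    simp only [max_eq_left hxpos.le, max_eq_left hypos.le]
    nlinarith
end

section
/- Let 0 < τ < 1, a > 0, and define recursively t₀(x) = 0; t₁(x) = 0 if x ≥ a, t₁(x) = a−x if a−x ∉ [τ,1)+ℕ, and t₁(x) = ⌈a−x⌉ otherwise; and t_{i+1}(x) = t_i(x) + a if t_i(x)+a ∉ [τ,1)+ℕ (using the division-time update of the paper), else t_{i+1}(x) = ⌈t_i(x)+a⌉. Then: (i) for i < N_a, t_i(0) = i·a and t_{N_a}(0) = p_a + 1; (ii) for x > a and all i ≥ 0, t_{i+1}(x) = t_i(0); (iii) for each i, x ↦ t_i(x) is nonincreasing; (iv) for all i, t_i(x) ≤ t_i(0) ≤ t_{i+1}(x). -/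
open Real Set
open scoped Classical

/-- The semi-open set `[τ,1) + ℕ`. -/
def WsetOpen (τ : ℝ) : Set ℝ := {x | ∃ n : ℕ, (n : ℝ) + τ ≤ x ∧ x < (n : ℝ) + 1}

/-- The rounding function used in the recursion. -/
noncomputable def gfun (τ : ℝ) (u : ℝ) : ℝ :=
  if u ∉ WsetOpen τ then u else ((⌈u⌉ : ℤ) : ℝ)

lemma gfun_le (τ u : ℝ) : u ≤ gfun τ u := by
  unfold gfun
  split
  · exact le_refl u
  · exact Int.le_ceil u

lemma ceil_of_between (τ : ℝ) (hτ0 : 0 < τ) {n : ℕ} {u : ℝ}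
    (h1 : (n : ℝ) + τ ≤ u) (h2 : u < (n : ℝ) + 1) :
    ((⌈u⌉ : ℤ) : ℝ) = (n : ℝ) + 1 := by
  have : ⌈u⌉ = (n : ℤ) + 1 := by
    rw [Int.ceil_eq_iff]
    constructor <;> push_cast <;> linarith
  rw [this]; push_cast; ring

lemma gfun_mono (τ : ℝ) (hτ0 : 0 < τ) {u v : ℝ} (h : u ≤ v) :
    gfun τ u ≤ gfun τ v := by
  by_cases hu : u ∈ WsetOpen τ
  · obtain ⟨n, h1, h2⟩ := hu
    have hgu : gfun τ u = (n : ℝ) + 1 := by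
      rw [gfun, if_neg (not_not.mpr ⟨n, h1, h2⟩)]
      exact ceil_of_between τ hτ0 h1 h2
    by_cases hv : v < (n : ℝ) + 1
    · have hgv : gfun τ v = (n : ℝ) + 1 := by
        rw [gfun, if_neg (not_not.mpr ⟨n, le_trans h1 h, hv⟩)]
        exact ceil_of_between τ hτ0 (le_trans h1 h) hv
      rw [hgu, hgv]
    · rw [hgu]
      calc (n : ℝ) + 1 ≤ v := le_of_not_gt hv
        _ ≤ gfun τ v := gfun_le τ v
  · calc gfun τ u = u := by rw [gfun, if_pos hu]
      _ ≤ v := h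
      _ ≤ gfun τ v := gfun_le τ v

theorem stmt_13 (τ a : ℝ) (hτ0 : 0 < τ) (hτ1 : τ < 1) (ha : 0 < a)
    (t : ℕ → ℝ → ℝ)
    (ht0 : ∀ x, t 0 x = 0)
    (ht1 : ∀ x, t 1 x =
      if a ≤ x then 0
      else if a - x ∉ WsetOpen τ then a - x else ((⌈a - x⌉ : ℤ) : ℝ))
    (hstep : ∀ i : ℕ, 1 ≤ i → ∀ x, t (i + 1) x =
      if t i x + a ∉ WsetOpen τ then t i x + a else ((⌈t i x + a⌉ : ℤ) : ℝ)) :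
    (∀ i : ℕ, i < Nmin τ a → t i 0 = (i : ℝ) * a) ∧
    (t (Nmin τ a) 0 = ((⌈(Nmin τ a : ℝ) * a⌉ : ℤ) : ℝ)) ∧
    (∀ x : ℝ, a < x → ∀ i : ℕ, t (i + 1) x = t i 0) ∧
    (∀ i : ℕ, ∀ x y : ℝ, 0 ≤ x → x ≤ y → t i y ≤ t i x) ∧
    (∀ i : ℕ, ∀ x : ℝ, 0 ≤ x → t i x ≤ t i 0 ∧ t i 0 ≤ t (i + 1) x) := by
  -- recursion in terms of gfun
  have hg1 : ∀ i : ℕ, 1 ≤ i → ∀ x, t (i + 1) x = gfun τ (t i x + a) := by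
    intro i hi x
    rw [hstep i hi x, gfun]
  have ht1' : ∀ x, ¬ a ≤ x → t 1 x = gfun τ (a - x) := by
    intro x hx
    rw [ht1 x, if_neg hx, gfun]
  have hgx0 : ∀ i : ℕ, t (i + 1) 0 = gfun τ (t i 0 + a) := by
    intro i
    rcases Nat.eq_zero_or_pos i with h | h
    · subst h
      rw [ht1' 0 (not_le.mpr ha), ht0, sub_zero, zero_add]
    · exact hg1 i h 0
  -- monotonicity (part iii)
  have mono : ∀ i : ℕ, ∀ x y : ℝ, 0 ≤ x → x ≤ y → t i y ≤ t i x := by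
    intro i
    induction i with
    | zero => intro x y _ _; rw [ht0, ht0]
    | succ i ih =>
      intro x y hx hxy
      rcases Nat.eq_zero_or_pos i with h | h
      · subst h
        by_cases hax : a ≤ x
        · rw [ht1 x, if_pos hax, ht1 y, if_pos (le_trans hax hxy)]
        · by_cases hay : a ≤ y
          · rw [ht1 y, if_pos hay, ht1' x hax]
            have : a - x ≤ gfun τ (a - x) := gfun_le τ (a - x)
            have : 0 < a - x := by linarith [not_le.mp hax]
            linarith [gfun_le τ (a - x)]
          · rw [ht1' x hax, ht1' y hay]
            exact gfun_mono τ hτ0 (by linarith)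
      · rw [hg1 i h x, hg1 i h y]
        exact gfun_mono τ hτ0 (by linarith [ih x y hx hxy])
  -- key inequality: t i 0 ≤ t (i+1) x for x ≥ 0
  have key : ∀ i : ℕ, ∀ x : ℝ, 0 ≤ x → t i 0 ≤ t (i + 1) x := by
    intro i
    induction i with
    | zero =>
      intro x hx
      rw [ht0]
      by_cases hax : a ≤ x
      · rw [ht1 x, if_pos hax]
      · rw [ht1' x hax]
        have := gfun_le τ (a - x)
        have : 0 < a - x := by linarith [not_le.mp hax]
        linarith [gfun_le τ (a - x)]
    | succ i ih =>
      intro x hx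
      rw [hgx0 i, hg1 (i + 1) (Nat.le_add_left 1 i) x]
      exact gfun_mono τ hτ0 (by linarith [ih x hx])
  -- part (i), first half
  have part1 : ∀ i : ℕ, i < Nmin τ a → t i 0 = (i : ℝ) * a := by
    intro i
    induction i with
    | zero => intro _; rw [ht0]; simp
    | succ i ih =>
      intro h
      have hi : i < Nmin τ a := Nat.lt_of_succ_lt h
      have hnmem : (i + 1) ∉ {k : ℕ | 1 ≤ k ∧ (k : ℝ) * a ∈ Wset τ} :=
        Nat.notMem_of_lt_sInf h
      have hW : ((i + 1 : ℕ) : ℝ) * a ∉ Wset τ := by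
        intro hmem
        exact hnmem ⟨Nat.le_add_left 1 i, hmem⟩
      have hWo : ((i + 1 : ℕ) : ℝ) * a ∉ WsetOpen τ := by
        intro ⟨n, h1, h2⟩
        exact hW ⟨n, h1, le_of_lt h2⟩
      rw [hgx0 i, ih hi]
      have heq : (i : ℝ) * a + a = ((i + 1 : ℕ) : ℝ) * a := by push_cast; ring
      rw [heq, gfun, if_pos hWo]
  -- part (i), second half
  have part2 : t (Nmin τ a) 0 = ((⌈(Nmin τ a : ℝ) * a⌉ : ℤ) : ℝ) := by
    rcases Nat.eq_zero_or_pos (Nmin τ a) with h | h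
    · rw [h, ht0]; simp
    · obtain ⟨m, hm⟩ := Nat.exists_eq_succ_of_ne_zero (Nat.pos_iff_ne_zero.mp h)
      have hne : {k : ℕ | 1 ≤ k ∧ (k : ℝ) * a ∈ Wset τ}.Nonempty := by
        by_contra hc
        rw [Set.not_nonempty_iff_eq_empty] at hc
        have : Nmin τ a = 0 := by rw [Nmin, hc, Nat.sInf_empty]
        omega
      obtain ⟨-, n, hn1, hn2⟩ := Nat.sInf_mem hne
      have hNW : ((Nmin τ a : ℝ)) * a ∈ Wset τ := ⟨n, hn1, hn2⟩
      have hmlt : m < Nmin τ a := by omega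
      have ht' : t (Nmin τ a) 0 = gfun τ ((Nmin τ a : ℝ) * a) := by
        rw [hm, hgx0 m, part1 m (by omega)]
        congr 1
        push_cast; ring
      rw [ht', gfun]
      split
      · -- Nmin·a ∉ WsetOpen: then Nmin·a = n+1
        rename_i hno
        have : ¬ ((Nmin τ a : ℝ) * a < (n : ℝ) + 1) := by
          intro hlt
          exact hno ⟨n, hn1, hlt⟩
        have heq : (Nmin τ a : ℝ) * a = (n : ℝ) + 1 := le_antisymm hn2 (le_of_not_gt this)
        rw [heq]
        have : ⌈(n : ℝ) + 1⌉ = (n : ℤ) + 1 := by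
          rw [Int.ceil_eq_iff] <;> push_cast <;> constructor <;> linarith
        rw [this]; push_cast; ring
      · rfl
  -- part (ii)
  have part3 : ∀ x : ℝ, a < x → ∀ i : ℕ, t (i + 1) x = t i 0 := by
    intro x hax i
    induction i with
    | zero => rw [ht1 x, if_pos (le_of_lt hax), ht0]
    | succ i ih =>
      rw [hg1 (i + 1) (Nat.le_add_left 1 i) x, ih, ← hgx0 i]
  refine ⟨part1, part2, part3, mono, ?_⟩
  intro i x hx
  exact ⟨mono i 0 x le_rfl hx, key i x hx⟩
end

section
/- With the notation of the division-time sequence t_i(x) (0 < τ < 1, a > 0, N_a = min{k≥1 : ka ∈ [τ,1]+ℕ}, p_a = ⌈N_a a⌉ − 1): if x > 1−τ, or if x = 1−τ and N_a·a ≠ p_a+1, then t_{N_a}(x) < p_a + 1. -/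
open Real Set
open scoped Classical

lemma small_aux (τ : ℝ) (hτ0 : 0 < τ) (hτ1 : τ < 1) :
    ∀ m : ℕ, ∀ a : ℝ, 0 < a → a < 1 → a ≤ m * (1 - τ) →
    ∃ k n : ℕ, 1 ≤ k ∧ (n : ℝ) + τ ≤ k * a ∧ (k : ℝ) * a ≤ n + 1 := by
  intro m
  induction m with
  | zero => intro a ha ha1 hle; norm_num at hle; nlinarith
  | succ m ih =>
    intro a ha ha1 hle
    by_cases hc1 : a + τ ≤ 1
    · refine ⟨⌈τ / a⌉₊, 0, ?_, ?_, ?_⟩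
      · have : 0 < τ / a := div_pos hτ0 ha
        exact Nat.one_le_ceil_iff.mpr this
      · have h1 : τ / a ≤ (⌈τ / a⌉₊ : ℝ) := Nat.le_ceil _
        have := (div_le_iff₀ ha).mp h1
        push_cast
        linarith
      · have h2 : (⌈τ / a⌉₊ : ℝ) < τ / a + 1 := Nat.ceil_lt_add_one (le_of_lt (div_pos hτ0 ha))
        have : (⌈τ / a⌉₊ : ℝ) * a < (τ / a + 1) * a := by
          exact mul_lt_mul_of_pos_right h2 ha
        have hd : (τ / a + 1) * a = τ + a := by field_simp
        push_cast
        linarith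
    · by_cases hc2 : τ ≤ a
      · exact ⟨1, 0, le_refl 1, by push_cast; linarith, by push_cast; linarith⟩
      · push_neg at hc1 hc2
        set k := ⌈τ / a⌉₊ with hk
        have hk1 : 1 ≤ k := Nat.one_le_ceil_iff.mpr (div_pos hτ0 ha)
        have hlow : τ ≤ (k : ℝ) * a := by
          have h1 : τ / a ≤ (k : ℝ) := Nat.le_ceil _
          have := (div_le_iff₀ ha).mp h1
          linarith
        have hhigh : (k : ℝ) * a < τ + a := by
          have h2 : (k : ℝ) < τ / a + 1 := Nat.ceil_lt_add_one (le_of_lt (div_pos hτ0 ha))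
          have : (k : ℝ) * a < (τ / a + 1) * a := mul_lt_mul_of_pos_right h2 ha
          have hd : (τ / a + 1) * a = τ + a := by field_simp
          linarith
        by_cases hup : (k : ℝ) * a ≤ 1
        · exact ⟨k, 0, hk1, by push_cast; linarith, by push_cast; linarith⟩
        · push_neg at hup
          obtain ⟨k', n', hk', h1, h2⟩ := ih ((k : ℝ) * a - 1)
            (by linarith) (by linarith)
            (by push_cast at hle ⊢; linarith)
          refine ⟨k' * k, n' + k', Nat.one_le_iff_ne_zero.mpr (by positivity), ?_, ?_⟩
          · have : (n' : ℝ) + τ ≤ (k' : ℝ) * ((k : ℝ) * a - 1) := h1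
            push_cast
            nlinarith
          · have : (k' : ℝ) * ((k : ℝ) * a - 1) ≤ (n' : ℝ) + 1 := h2
            push_cast
            nlinarith

lemma wmem_exists (τ a : ℝ) (hτ0 : 0 < τ) (hτ1 : τ < 1) (ha : 0 < a) :
    ∃ k : ℕ, 1 ≤ k ∧ (k : ℝ) * a ∈ Wset τ := by
  have hfl0 : (0 : ℤ) ≤ ⌊a⌋ := Int.floor_nonneg.mpr ha.le
  have hflcast : ((⌊a⌋.toNat : ℕ) : ℝ) = (⌊a⌋ : ℝ) := by
    exact_mod_cast congrArg (fun z : ℤ => (z : ℝ)) (Int.toNat_of_nonneg hfl0)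
  rcases eq_or_lt_of_le (Int.fract_nonneg a) with hb0 | hbpos
  · -- a is an integer
    have hfr : Int.fract a = 0 := hb0.symm
    have haeq : a = (⌊a⌋ : ℝ) := by
      have := Int.fract_add_floor a
      rw [hfr] at this; linarith
    have hfl1 : (1 : ℤ) ≤ ⌊a⌋ := by
      by_contra hcon
      push_neg at hcon
      have : ⌊a⌋ ≤ 0 := by omega
      have : (⌊a⌋ : ℝ) ≤ 0 := by exact_mod_cast this
      linarith [haeq ▸ ha]
    refine ⟨1, le_refl 1, ⟨⌊a⌋.toNat - 1, ?_, ?_⟩⟩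
    · have hc : ((⌊a⌋.toNat - 1 : ℕ) : ℝ) = (⌊a⌋ : ℝ) - 1 := by
        have h1 : ((⌊a⌋.toNat - 1 : ℕ) : ℤ) = ⌊a⌋ - 1 := by omega
        exact_mod_cast h1
      rw [hc]
      push_cast
      linarith [haeq]
    · have hc : ((⌊a⌋.toNat - 1 : ℕ) : ℝ) = (⌊a⌋ : ℝ) - 1 := by
        have h1 : ((⌊a⌋.toNat - 1 : ℕ) : ℤ) = ⌊a⌋ - 1 := by omega
        exact_mod_cast h1
      rw [hc]
      push_cast
      linarith [haeq]
  · set b := Int.fract a with hbdef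
    have hb1 : b < 1 := Int.fract_lt_one a
    set m := ⌈1 / (1 - τ)⌉₊ with hm
    have hmle : 1 / (1 - τ) ≤ (m : ℝ) := Nat.le_ceil _
    have hmb : b ≤ (m : ℝ) * (1 - τ) := by
      have h1 : 1 ≤ (m : ℝ) * (1 - τ) := by
        have := (div_le_iff₀ (by linarith : (0:ℝ) < 1 - τ)).mp hmle
        linarith
      linarith
    obtain ⟨k, n, hk1, h1, h2⟩ := small_aux τ hτ0 hτ1 m b hbpos hb1 hmb
    refine ⟨k, hk1, ⟨n + k * ⌊a⌋.toNat, ?_, ?_⟩⟩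
    · have hab : a = (⌊a⌋ : ℝ) + b := by
        have := Int.fract_add_floor a
        linarith
      have hkc : (1 : ℝ) ≤ (k : ℝ) := by exact_mod_cast hk1
      have hfc : ((⌊a⌋.toNat : ℕ) : ℝ) = a - b := by rw [hflcast]; linarith
      push_cast
      rw [hfc]
      nlinarith
    · have hab : a = (⌊a⌋ : ℝ) + b := by
        have := Int.fract_add_floor a
        linarith
      have hkc : (1 : ℝ) ≤ (k : ℝ) := by exact_mod_cast hk1
      have hfc : ((⌊a⌋.toNat : ℕ) : ℝ) = a - b := by rw [hflcast]; linarith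
      push_cast
      rw [hfc]
      nlinarith

theorem stmt_14 (τ a : ℝ) (hτ0 : 0 < τ) (hτ1 : τ < 1) (ha : 0 < a)
    (t : ℕ → ℝ → ℝ)
    (ht0 : ∀ x, t 0 x = 0)
    (ht1 : ∀ x, t 1 x =
      if a ≤ x then 0
      else if a - x ∉ WsetOpen τ then a - x else ((⌈a - x⌉ : ℤ) : ℝ))
    (hstep : ∀ i : ℕ, 1 ≤ i → ∀ x, t (i + 1) x =
      if t i x + a ∉ WsetOpen τ then t i x + a else ((⌈t i x + a⌉ : ℤ) : ℝ))
    (x : ℝ)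
    (hx : 1 - τ < x ∨ (x = 1 - τ ∧ (Nmin τ a : ℝ) * a ≠ ((⌈(Nmin τ a : ℝ) * a⌉ : ℤ) : ℝ))) :
    t (Nmin τ a) x < ((⌈(Nmin τ a : ℝ) * a⌉ : ℤ) : ℝ) := by
  obtain ⟨k0, hk0⟩ := wmem_exists τ a hτ0 hτ1 ha
  set N := Nmin τ a with hNdef
  have hne : {k : ℕ | 1 ≤ k ∧ (k : ℝ) * a ∈ Wset τ}.Nonempty := ⟨k0, hk0⟩
  have hNmem : N ∈ {k : ℕ | 1 ≤ k ∧ (k : ℝ) * a ∈ Wset τ} := Nat.sInf_mem hne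
  have hN1 : 1 ≤ N := hNmem.1
  have hmin : ∀ k : ℕ, 1 ≤ k → k < N → (k : ℝ) * a ∉ Wset τ := by
    intro k h1 h2 hmem
    exact Nat.notMem_of_lt_sInf h2 ⟨h1, hmem⟩
  have hnotopen : ∀ (m k : ℕ), 1 ≤ k → k < N → ((m : ℝ) + k * a) ∉ WsetOpen τ := by
    intro m k h1 h2 hmem
    obtain ⟨n, hn1, hn2⟩ := hmem
    have hka : 0 < (k : ℝ) * a := by
      have : (0 : ℝ) < k := by exact_mod_cast h1
      positivity
    have hmn : m ≤ n := by
      by_contra hcon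
      push_neg at hcon
      have : (n : ℝ) + 1 ≤ m := by exact_mod_cast hcon
      linarith
    apply hmin k h1 h2
    have hcast : ((n - m : ℕ) : ℝ) = (n : ℝ) - m := by
      push_cast [Nat.cast_sub hmn]
      ring
    exact ⟨n - m, by rw [hcast]; linarith, by rw [hcast]; linarith⟩
  have hceil : (N : ℝ) * a ≤ ((⌈(N : ℝ) * a⌉ : ℤ) : ℝ) := Int.le_ceil _
  have hx0 : 0 < x := by rcases hx with h | ⟨h, _⟩ <;> linarith
  -- invariant
  have key : ∀ i : ℕ, 1 ≤ i → i ≤ N →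
      (t i x = i * a - x) ∨
      (∃ m k : ℕ, t i x = (m : ℝ) + k * a ∧ k + 1 ≤ i ∧
        (t i x ≤ i * a - x + (1 - τ) ∨ m = 0)) := by
    intro i hi
    induction i, hi using Nat.le_induction with
    | base =>
      intro _
      rw [ht1 x]
      by_cases hax : a ≤ x
      · right
        exact ⟨0, 0, by simp [hax], le_refl 1, Or.inr rfl⟩
      · rw [if_neg hax]
        by_cases hw : a - x ∉ WsetOpen τ
        · left; rw [if_pos hw]; push_cast; ring
        · rw [if_neg hw]
          push_neg at hw
          obtain ⟨n, h1, h2⟩ := hw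
          have hc : ⌈a - x⌉ = (n : ℤ) + 1 := by
            rw [Int.ceil_eq_iff]
            constructor
            · push_cast; linarith
            · push_cast; linarith
          right
          refine ⟨n + 1, 0, ?_, le_refl 1, Or.inl ?_⟩
          · rw [hc]; push_cast; ring
          · rw [hc]; push_cast; linarith
    | succ i hi1 ih =>
      intro hiN
      have hiN' : i ≤ N := le_trans (Nat.le_succ i) hiN
      have hiltN : i < N := hiN
      rcases ih hiN' with hA | ⟨m, k, hmk, hk, hbd⟩
      · rw [hstep i hi1 x, hA]
        by_cases hw : (i * a - x) + a ∉ WsetOpen τ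
        · left; rw [if_pos hw]; push_cast; ring
        · rw [if_neg hw]
          push_neg at hw
          obtain ⟨n, h1, h2⟩ := hw
          have hc : ⌈(i : ℝ) * a - x + a⌉ = (n : ℤ) + 1 := by
            rw [Int.ceil_eq_iff]
            constructor
            · push_cast; linarith
            · push_cast; linarith
          right
          refine ⟨n + 1, 0, ?_, by omega, Or.inl ?_⟩
          · rw [hc]; push_cast; ring
          · rw [hc]; push_cast; linarith
      · have hval : t i x + a = (m : ℝ) + ((k + 1 : ℕ) : ℝ) * a := by
          rw [hmk]; push_cast; ring
        have hno : t i x + a ∉ WsetOpen τ := by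
          rw [hval]
          exact hnotopen m (k + 1) (by omega) (by omega)
        rw [hstep i hi1 x, if_pos hno, hval]
        right
        refine ⟨m, k + 1, rfl, by omega, ?_⟩
        rcases hbd with h | h
        · left
          rw [← hval]
          push_cast
          push_cast at h
          linarith
        · right; exact h
  rcases key N hN1 (le_refl N) with hA | ⟨m, k, hmk, hk, hbd⟩
  · rw [hA]; linarith
  · rcases hbd with h | h
    · rcases hx with hx' | ⟨hxe, hne2⟩
      · linarith
      · have hlt : (N : ℝ) * a < ((⌈(N : ℝ) * a⌉ : ℤ) : ℝ) := lt_of_le_of_ne hceil hne2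
        linarith
    · subst h
      have hkN : (k : ℝ) ≤ (N : ℝ) - 1 := by
        have : (k : ℝ) + 1 ≤ N := by exact_mod_cast hk
        linarith
      have h1 : (k : ℝ) * a ≤ ((N : ℝ) - 1) * a := by nlinarith
      have h2 : ((N : ℝ) - 1) * a < (N : ℝ) * a := by nlinarith
      rw [hmk]
      push_cast
      linarith
end

section
/- Let 0 < τ < 1 and a' < a with λ^∞ constant on the interval between them. Suppose θ₁ ≤ … ≤ θ_N (N = N_a) and ε ≥ 0 with ε ≤ (a_r − a)/2 satisfy: θ₁ ≥ max(a−1+τ, 0); [θ_i, θ_i+ε] ⊆ [⌊θ_i⌋, ⌊θ_i⌋+τ] for all i; and θ_{i+1} ≥ θ_i + ε + a for i < N. Then the sequence θ'_i := max(⌊θ_i⌋, θ_i − (a−a')/2) satisfies the same three conditions with a replaced by a' and ε replaced by ε' := min(ε + (a−a')/2, τ): namely θ'₁ ≥ max(a'−1+τ, 0), [θ'_i, θ'_i+ε'] ⊆ [⌊θ'_i⌋, ⌊θ'_i⌋+τ], and θ'_{i+1} ≥ θ'_i + ε' + a'. -/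
open Real Set

lemma floor_max_eq (x δ : ℝ) (hδ : 0 ≤ δ) :
    ⌊max ((⌊x⌋ : ℝ)) (x - δ)⌋ = ⌊x⌋ := by
  have h1 : (⌊x⌋ : ℝ) ≤ max ((⌊x⌋ : ℝ)) (x - δ) := le_max_left _ _
  have h2 : max ((⌊x⌋ : ℝ)) (x - δ) < (⌊x⌋ : ℝ) + 1 := by
    apply max_lt
    · linarith
    · have := Int.lt_floor_add_one x; linarith
  exact Int.floor_eq_iff.mpr ⟨h1, h2⟩ |>.trans rfl |>.symm ▸ rfl

theorem stmt_15 (τ a a' ε : ℝ) (hτ0 : 0 < τ) (hτ1 : τ < 1) (ha' : 0 < a') (haa : a' < a)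
    (hconst : ∀ x : ℝ, a' ≤ x → x ≤ a → lamInf τ x = lamInf τ a)
    (N : ℕ) (hN : N = Nmin τ a) (θ : ℕ → ℝ)
    (hε0 : 0 ≤ ε)
    (hεr : ε ≤ (sSup {x : ℝ | 0 < x ∧ lamInf τ x = lamInf τ a} - a) / 2)
    (h1 : θ 1 ≥ max (a - 1 + τ) 0)
    (h2 : ∀ i : ℕ, 1 ≤ i → i ≤ N →
      Set.Icc (θ i) (θ i + ε) ⊆ Set.Icc ((⌊θ i⌋ : ℝ)) ((⌊θ i⌋ : ℝ) + τ))
    (h3 : ∀ i : ℕ, 1 ≤ i → i < N → θ (i + 1) ≥ θ i + ε + a) :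
    (fun i => max ((⌊θ i⌋ : ℝ)) (θ i - (a - a') / 2)) 1 ≥ max (a' - 1 + τ) 0 ∧
    (∀ i : ℕ, 1 ≤ i → i ≤ N →
      Set.Icc (max ((⌊θ i⌋ : ℝ)) (θ i - (a - a') / 2))
          (max ((⌊θ i⌋ : ℝ)) (θ i - (a - a') / 2) + min (ε + (a - a') / 2) τ) ⊆
        Set.Icc ((⌊max ((⌊θ i⌋ : ℝ)) (θ i - (a - a') / 2)⌋ : ℝ))
          ((⌊max ((⌊θ i⌋ : ℝ)) (θ i - (a - a') / 2)⌋ : ℝ) + τ)) ∧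
    (∀ i : ℕ, 1 ≤ i → i < N →
      max ((⌊θ (i + 1)⌋ : ℝ)) (θ (i + 1) - (a - a') / 2) ≥
        max ((⌊θ i⌋ : ℝ)) (θ i - (a - a') / 2) + min (ε + (a - a') / 2) τ + a') := by
  have hδ : (0:ℝ) ≤ (a - a') / 2 := by linarith
  refine ⟨?_, ?_, ?_⟩
  · simp only
    apply max_le
    · have : a - 1 + τ ≤ θ 1 := le_trans (le_max_left _ _) h1
      have : a' - 1 + τ ≤ θ 1 - (a - a') / 2 := by linarith
      exact le_trans this (le_max_right _ _)
    · have h0 : (0:ℝ) ≤ θ 1 := le_trans (le_max_right _ _) h1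
      have : (0:ℝ) ≤ (⌊θ 1⌋ : ℝ) := by
        exact_mod_cast Int.floor_nonneg.mpr h0
      exact le_trans this (le_max_left _ _)
  · intro i hi1 hiN
    rw [floor_max_eq (θ i) _ hδ]
    intro x hx
    constructor
    · exact le_trans (le_max_left _ _) hx.1
    · refine le_trans hx.2 ?_
      rcases max_cases ((⌊θ i⌋ : ℝ)) (θ i - (a - a') / 2) with ⟨heq, _⟩ | ⟨heq, _⟩
      · rw [heq]
        have : min (ε + (a - a') / 2) τ ≤ τ := min_le_right _ _
        linarith
      · rw [heq]
        have hub : θ i + ε ≤ (⌊θ i⌋ : ℝ) + τ :=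
          (h2 i hi1 hiN ⟨by linarith, le_refl _⟩).2
        have : min (ε + (a - a') / 2) τ ≤ ε + (a - a') / 2 := min_le_left _ _
        linarith
  · intro i hi1 hiN
    have h3i := h3 i hi1 hiN
    have hle : max ((⌊θ i⌋ : ℝ)) (θ i - (a - a') / 2) ≤ θ i :=
      max_le (Int.floor_le _) (by linarith)
    have hmin : min (ε + (a - a') / 2) τ ≤ ε + (a - a') / 2 := min_le_left _ _
    have : θ (i + 1) - (a - a') / 2 ≥
        max ((⌊θ i⌋ : ℝ)) (θ i - (a - a') / 2) + min (ε + (a - a') / 2) τ + a' := by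
      linarith
    exact le_trans this (le_max_right _ _)
end

section
/- Let a, κ, α > 0 and B as above, and let μ(κ) > 0 solve 2∫_a^∞ κα B(x) exp(−μx − κα∫_a^x B(y)dy) dx = 1. Then μ(κ) → (log 2)/a as κ → ∞. -/
/-!
Write `F x = ∫_a^x B` and `c = κα`. The integrand is `e^{-μx}` times `c B e^{-cF} = -(e^{-cF})'`,
and `e^{-cF}` is absolutely continuous, so `∫_a^M c B e^{-cF} = 1 - e^{-cF(M)}`. Bounding `e^{-μx}`
by `e^{-μa}` on `(a, ∞)` and by `e^{-μM}` on `(a, M]` turns the defining equation into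
`e^{-μM} (1 - e^{-cF(M)}) ≤ 1/2 ≤ e^{-μa}`, i.e.
`log (2 (1 - e^{-καF(M)})) / M ≤ μ(κ) ≤ log 2 / a`. As `F(M) > 0` for `M > a`, the lower bound
tends to `log 2 / M` as `κ → ∞`, and `M > a` is arbitrary.
-/

open Real Set MeasureTheory Filter Topology

theorem LipschitzOnWith.comp_absolutelyContinuousOnInterval {X Y : Type*} [PseudoMetricSpace X]
    [PseudoMetricSpace Y] {g : X → Y} {f : ℝ → X} {K : NNReal} {t : Set X} {a b : ℝ}
    (hg : LipschitzOnWith K g t) (hf : AbsolutelyContinuousOnInterval f a b)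
    (hft : MapsTo f (uIcc a b) t) : AbsolutelyContinuousOnInterval (g ∘ f) a b := by
  have hKf : Tendsto (fun E : ℕ × (ℕ → ℝ × ℝ) =>
      (K : ℝ) * ∑ i ∈ Finset.range E.1, dist (f (E.2 i).1) (f (E.2 i).2))
      (AbsolutelyContinuousOnInterval.totalLengthFilter ⊓
        𝓟 (AbsolutelyContinuousOnInterval.disjWithin a b)) (𝓝 0) := by
    simpa using (Tendsto.const_mul (K : ℝ) hf)
  refine squeeze_zero' (.of_forall fun E => Finset.sum_nonneg fun i _ => dist_nonneg) ?_ hKf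
  filter_upwards [mem_inf_of_right (mem_principal_self _)] with E hE
  rw [Finset.mul_sum]
  gcongr with i hi
  exact hg.dist_le_mul _ (hft (hE.1 i hi).1) _ (hft (hE.1 i hi).2)

theorem ContDiff.comp_absolutelyContinuousOnInterval {g f : ℝ → ℝ} {a b : ℝ}
    (hg : ContDiff ℝ 1 g) (hf : AbsolutelyContinuousOnInterval f a b) :
    AbsolutelyContinuousOnInterval (g ∘ f) a b := by
  obtain ⟨K, hK⟩ := hg.locallyLipschitz.locallyLipschitzOn.exists_lipschitzOnWith_of_compact
    (isCompact_uIcc.image_of_continuousOn hf.continuousOn)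
  exact hK.comp_absolutelyContinuousOnInterval hf (mapsTo_image f _)

section ExpNegIntegral

variable {B : ℝ → ℝ} {a b : ℝ}

theorem integral_mul_exp_neg_integral (c : ℝ) (hB : IntervalIntegrable B volume a b) :
    ∫ x in a..b, c * B x * exp (-(c * ∫ y in a..x, B y)) = 1 - exp (-(c * ∫ y in a..b, B y)) := by
  set G : ℝ → ℝ := fun x => exp (-(c * ∫ y in a..x, B y))
  have hG : AbsolutelyContinuousOnInterval G a b :=
    (show ContDiff ℝ 1 fun u => exp (-(c * u)) by fun_prop).comp_absolutelyContinuousOnInterval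
      (hB.absolutelyContinuousOnInterval_intervalIntegral left_mem_uIcc)
  have hderiv : ∀ᵐ x, x ∈ uIoc a b → c * B x * G x = -deriv G x := by
    filter_upwards [hB.ae_hasDerivAt_integral] with x hx hxab
    have hGx : HasDerivAt G (G x * -(c * B x)) x :=
      ((hx (uIoc_subset_uIcc hxab) a left_mem_uIcc).const_mul c).neg.exp
    rw [hGx.deriv]
    ring
  rw [intervalIntegral.integral_congr_ae hderiv, intervalIntegral.integral_neg,
    hG.integral_deriv_eq_sub]
  simp [G]

theorem intervalIntegrable_mul_exp_neg_integral (c : ℝ) (hB : IntervalIntegrable B volume a b) :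
    IntervalIntegrable (fun x => c * B x * exp (-(c * ∫ y in a..x, B y))) volume a b :=
  (hB.const_mul c).mul_continuousOn <|
    (intervalIntegral.continuousOn_primitive_interval' hB left_mem_uIcc).const_smul c
      |>.neg.rexp

end ExpNegIntegral

theorem mul_exp_sub_eq_exp_mul {c μ b x F : ℝ} :
    c * b * exp (-μ * x - c * F) = exp (-μ * x) * (c * b * exp (-(c * F))) := by
  rw [sub_eq_add_neg, exp_add]
  ring

section WeightedIntegral

variable {B : ℝ → ℝ} {a c μ : ℝ}

theorem setIntegral_Ioi_mul_exp_le (hc : 0 ≤ c) (hμ : 0 ≤ μ) (hB0 : ∀ x, a ≤ x → 0 ≤ B x)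
    (hB : ∀ M, a ≤ M → IntervalIntegrable B volume a M) :
    ∫ x in Ioi a, c * B x * exp (-μ * x - c * ∫ y in a..x, B y) ≤ exp (-μ * a) := by
  by_cases hi : IntegrableOn (fun x => c * B x * exp (-μ * x - c * ∫ y in a..x, B y)) (Ioi a)
  swap
  · rw [integral_undef hi]
    positivity
  refine le_of_tendsto (intervalIntegral_tendsto_integral_Ioi a hi tendsto_id) ?_
  filter_upwards [eventually_ge_atTop a] with M haM
  calc ∫ x in a..M, c * B x * exp (-μ * x - c * ∫ y in a..x, B y)
      ≤ ∫ x in a..M, exp (-μ * a) * (c * B x * exp (-(c * ∫ y in a..x, B y))) := by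
        refine intervalIntegral.integral_mono_on haM
          ((intervalIntegrable_iff_integrableOn_Ioc_of_le haM).2 (hi.mono_set Ioc_subset_Ioi_self))
          ((intervalIntegrable_mul_exp_neg_integral c (hB M haM)).const_mul _) fun x hx => ?_
        rw [mul_exp_sub_eq_exp_mul]
        have := hB0 x hx.1
        exact mul_le_mul_of_nonneg_right (exp_le_exp.2 (by nlinarith [hx.1])) (by positivity)
    _ = exp (-μ * a) * (1 - exp (-(c * ∫ y in a..M, B y))) := by
        rw [intervalIntegral.integral_const_mul, integral_mul_exp_neg_integral c (hB M haM)]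
    _ ≤ exp (-μ * a) :=
        mul_le_of_le_one_right (exp_pos _).le (sub_le_self _ (exp_pos _).le)

theorem exp_mul_one_sub_le_setIntegral_Ioi {M : ℝ} (hc : 0 ≤ c) (hμ : 0 ≤ μ)
    (hB0 : ∀ x, a ≤ x → 0 ≤ B x) (hB : IntervalIntegrable B volume a M) (haM : a ≤ M)
    (hi : IntegrableOn (fun x => c * B x * exp (-μ * x - c * ∫ y in a..x, B y)) (Ioi a)) :
    exp (-μ * M) * (1 - exp (-(c * ∫ y in a..M, B y))) ≤
      ∫ x in Ioi a, c * B x * exp (-μ * x - c * ∫ y in a..x, B y) := by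
  calc exp (-μ * M) * (1 - exp (-(c * ∫ y in a..M, B y)))
      = ∫ x in a..M, exp (-μ * M) * (c * B x * exp (-(c * ∫ y in a..x, B y))) := by
        rw [intervalIntegral.integral_const_mul, integral_mul_exp_neg_integral c hB]
    _ ≤ ∫ x in a..M, c * B x * exp (-μ * x - c * ∫ y in a..x, B y) := by
        refine intervalIntegral.integral_mono_on haM
          ((intervalIntegrable_mul_exp_neg_integral c hB).const_mul _)
          ((intervalIntegrable_iff_integrableOn_Ioc_of_le haM).2 (hi.mono_set Ioc_subset_Ioi_self))
          fun x hx => ?_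
        rw [mul_exp_sub_eq_exp_mul]
        have := hB0 x hx.1
        exact mul_le_mul_of_nonneg_right (exp_le_exp.2 (by nlinarith [hx.2])) (by positivity)
    _ = ∫ x in Ioc a M, c * B x * exp (-μ * x - c * ∫ y in a..x, B y) :=
        intervalIntegral.integral_of_le haM
    _ ≤ ∫ x in Ioi a, c * B x * exp (-μ * x - c * ∫ y in a..x, B y) := by
        refine setIntegral_mono_set hi ?_ Ioc_subset_Ioi_self.eventuallyLE
        refine (ae_restrict_iff' measurableSet_Ioi).2 (.of_forall fun x hx => ?_)
        have := hB0 x (le_of_lt hx)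
        positivity

theorem le_log_two_div_of_two_mul_setIntegral_eq_one (ha : 0 < a) (hc : 0 ≤ c) (hμ : 0 ≤ μ)
    (hB0 : ∀ x, a ≤ x → 0 ≤ B x) (hB : ∀ M, a ≤ M → IntervalIntegrable B volume a M)
    (hI : 2 * ∫ x in Ioi a, c * B x * exp (-μ * x - c * ∫ y in a..x, B y) = 1) :
    μ ≤ log 2 / a := by
  have h : 1 ≤ 2 * exp (-μ * a) := by linarith [setIntegral_Ioi_mul_exp_le hc hμ hB0 hB]
  have := log_le_log one_pos h
  rw [log_one, log_mul two_ne_zero (exp_pos _).ne', log_exp] at this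
  rw [le_div_iff₀ ha]
  linarith

theorem log_two_mul_one_sub_exp_div_le_of_two_mul_setIntegral_eq_one {M : ℝ} (hc : 0 ≤ c)
    (hμ : 0 ≤ μ) (hB0 : ∀ x, a ≤ x → 0 ≤ B x) (hB : IntervalIntegrable B volume a M)
    (haM : a ≤ M) (hM : 0 < M) (hcF : 0 < c * ∫ y in a..M, B y)
    (hI : 2 * ∫ x in Ioi a, c * B x * exp (-μ * x - c * ∫ y in a..x, B y) = 1) :
    log (2 * (1 - exp (-(c * ∫ y in a..M, B y)))) / M ≤ μ := by
  have hδ : 0 < 1 - exp (-(c * ∫ y in a..M, B y)) :=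
    sub_pos.2 (exp_lt_one_iff.2 (neg_neg_of_pos hcF))
  have h : 2 * (1 - exp (-(c * ∫ y in a..M, B y))) * exp (-μ * M) ≤ 1 := by
    linarith [exp_mul_one_sub_le_setIntegral_Ioi hc hμ hB0 hB haM
      (Integrable.of_integral_ne_zero (right_ne_zero_of_mul_eq_one hI))]
  have := log_le_log (by positivity) h
  rw [log_one, log_mul (by positivity) (exp_pos _).ne', log_exp] at this
  rw [div_le_iff₀ hM]
  linarith

end WeightedIntegral

theorem tendsto_log_two_mul_one_sub_exp_neg {ι : Type*} {l : Filter ι} {f : ι → ℝ}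
    (hf : Tendsto f l atTop) : Tendsto (fun i => log (2 * (1 - exp (-f i)))) l (𝓝 (log 2)) := by
  simpa using (tendsto_const_nhds.mul
    (tendsto_const_nhds.sub (tendsto_exp_neg_atTop_nhds_zero.comp hf))).log
      (by norm_num : (2 : ℝ) * (1 - 0) ≠ 0)

theorem Measurable.intervalIntegrable_of_nonneg_of_le {B : ℝ → ℝ} {a M C : ℝ}
    (hBm : Measurable B) (hB0 : ∀ x, a ≤ x → 0 ≤ B x) (hC : ∀ x, B x ≤ C) (haM : a ≤ M) :
    IntervalIntegrable B volume a M :=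
  (intervalIntegrable_iff_integrableOn_Ioc_of_le haM).2 <|
    Measure.integrableOn_of_bounded measure_Ioc_lt_top.ne hBm.aestronglyMeasurable <|
      (ae_restrict_iff' measurableSet_Ioc).2 <| .of_forall fun x hx => by
        rw [norm_of_nonneg (hB0 x hx.1.le)]
        exact hC x

theorem stmt_17_general (a α : ℝ) (ha : 0 < a) (hα : 0 < α)
    (B : ℝ → ℝ) (hBm : Measurable B) (hBpos : ∀ x : ℝ, 0 ≤ x → 0 < B x)
    (hBbd : ∃ C : ℝ, ∀ x : ℝ, B x ≤ C)
    (μ : ℝ → ℝ)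
    (hμ : ∀ κ : ℝ, 0 < κ → 0 < μ κ ∧
      (2 * ∫ x in Set.Ioi a,
          κ * α * B x * Real.exp (-(μ κ) * x - κ * α * ∫ y in a..x, B y)) = 1) :
    Filter.Tendsto μ Filter.atTop (nhds (Real.log 2 / a)) := by
  obtain ⟨C, hC⟩ := hBbd
  have hB0 : ∀ x, a ≤ x → 0 ≤ B x := fun x hx => (hBpos x (ha.le.trans hx)).le
  have hB : ∀ M, a ≤ M → IntervalIntegrable B volume a M :=
    fun M => hBm.intervalIntegrable_of_nonneg_of_le hB0 hC
  refine tendsto_order.2 ⟨fun b hb => ?_, fun b hb => ?_⟩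
  · obtain ⟨M, hbM, haM⟩ : ∃ M, b < log 2 / M ∧ a < M :=
      ((((continuousAt_const.div continuousAt_id ha.ne').eventually (lt_mem_nhds hb)).filter_mono
        nhdsWithin_le_nhds).and self_mem_nhdsWithin).exists (f := 𝓝[>] a)
    have hFM : 0 < ∫ y in a..M, B y := intervalIntegral.intervalIntegral_pos_of_pos_on
      (hB M haM.le) (fun x hx => hBpos x (by linarith [hx.1])) haM
    have hcF : Tendsto (fun κ => κ * α * ∫ y in a..M, B y) atTop atTop :=
      (tendsto_id.atTop_mul_const hα).atTop_mul_const hFM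
    have hlim := (tendsto_log_two_mul_one_sub_exp_neg hcF).div_const M
    filter_upwards [hlim.eventually (lt_mem_nhds hbM), eventually_gt_atTop 0] with κ hbκ hκ
    exact hbκ.trans_le <| log_two_mul_one_sub_exp_div_le_of_two_mul_setIntegral_eq_one
      (by positivity) (hμ κ hκ).1.le hB0 (hB M haM.le) haM.le (ha.trans haM)
      (by positivity) (hμ κ hκ).2
  · filter_upwards [eventually_gt_atTop 0] with κ hκ
    exact (le_log_two_div_of_two_mul_setIntegral_eq_one ha (by positivity) (hμ κ hκ).1.le
      hB0 hB (hμ κ hκ).2).trans_lt hb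

theorem stmt_17 (a α : ℝ) (ha : 0 < a) (hα : 0 < α)
    (B : ℝ → ℝ) (hBm : Measurable B) (hBpos : ∀ x : ℝ, 0 ≤ x → 0 < B x)
    (hBbd : ∃ C : ℝ, ∀ x : ℝ, B x ≤ C)
    (hBint : ¬ MeasureTheory.IntegrableOn B (Set.Ioi a))
    (μ : ℝ → ℝ)
    (hμ : ∀ κ : ℝ, 0 < κ → 0 < μ κ ∧
      (2 * ∫ x in Set.Ioi a,
          κ * α * B x * Real.exp (-(μ κ) * x - κ * α * ∫ y in a..x, B y)) = 1) :
    Filter.Tendsto μ Filter.atTop (nhds (Real.log 2 / a)) :=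
  stmt_17_general a α ha hα B hBm hBpos hBbd μ hμ
end
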